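/- arXiv:0911.4366 — 7 statements merged into one kernel-verified Lean document; each statement's English description precedes it below -/
import Mathlib

section
/- Let G be a finite simple graph with minimum degree at least 3, let u be a vertex of G, and for each integer d ≥ 0 let N_d be the set of vertices at graph distance exactly d from u. Let d ≥ 2. If G contains no diamond with at most 3d + 2 edges, then |N_d| ≥ (3/2)·|N_{d−2}|. -/
/-
Write `ℓ = G.dist u`; a neighbour `y` of `x` is lower if `ℓ y ≤ ℓ x` and upper (a child) otherwise.
If a vertex `x` has three distinct neighbours, each joined to `u` by a walk avoiding `x`, then the
union of these walks contains a diamond with at most their total length plus three edges. Without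
diamonds of size at most `3d + 2`, every vertex at level at most `d - 1` therefore has at most two
lower neighbours, hence a child; and near a vertex `v ∈ N_{d-2}` with few children, the children
and grandchildren of `v` cannot reach `u` avoiding `v` by walks of length about `d`.

Call `v w q` an ascent if its levels are `d - 2, d - 1, d` and consecutive vertices are adjacent;
at most two ascents end at any `q`. Let every ascent send charge `1 / #(ascents with the same end)`
to its start: the total charge is at most `|N_d|`. Each `v ∈ N_{d-2}` receives at least `3/2`, since
by a case analysis on its number of children it starts three ascents, or two of which one ends at
a vertex where no other ascent ends.
-/

open SimpleGraph

variable {V : Type*}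

/-- A diamond in a simple graph: two distinct vertices joined by three pairwise
internally vertex-disjoint paths. -/
structure SimpleGraph.Diamond (G : SimpleGraph V) where
  u : V
  v : V
  ne : u ≠ v
  p₁ : G.Walk u v
  p₂ : G.Walk u v
  p₃ : G.Walk u v
  h₁ : p₁.IsPath
  h₂ : p₂.IsPath
  h₃ : p₃.IsPath
  ne₁₂ : p₁ ≠ p₂
  ne₁₃ : p₁ ≠ p₃
  ne₂₃ : p₂ ≠ p₃
  disj₁₂ : ∀ x, x ∈ p₁.support → x ∈ p₂.support → x = u ∨ x = v
  disj₁₃ : ∀ x, x ∈ p₁.support → x ∈ p₃.support → x = u ∨ x = v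
  disj₂₃ : ∀ x, x ∈ p₂.support → x ∈ p₃.support → x = u ∨ x = v

/-- The number of edges of a diamond. -/
def SimpleGraph.Diamond.size {G : SimpleGraph V} (D : G.Diamond) : ℕ :=
  D.p₁.length + D.p₂.length + D.p₃.length

/-- The vertex set of a diamond. -/
def SimpleGraph.Diamond.vertexSet {G : SimpleGraph V} (D : G.Diamond) : Set V :=
  {x | x ∈ D.p₁.support ∨ x ∈ D.p₂.support ∨ x ∈ D.p₃.support}

/-- The edge set of a diamond. -/
def SimpleGraph.Diamond.edgeSet {G : SimpleGraph V} (D : G.Diamond) : Set (Sym2 V) :=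
  {e | e ∈ D.p₁.edges ∨ e ∈ D.p₂.edges ∨ e ∈ D.p₃.edges}

/-- A set of vertices hitting every diamond of `G`. -/
def SimpleGraph.IsDiamondHittingSet (G : SimpleGraph V) (X : Set V) : Prop :=
  ∀ D : G.Diamond, ∃ x ∈ X, x ∈ D.vertexSet

/-- The cycles of `G`, identified with their edge sets. -/
def SimpleGraph.cycleSet (G : SimpleGraph V) : Set (Set (Sym2 V)) :=
  {s | ∃ (v : V) (w : G.Walk v v), w.IsCycle ∧ s = {e | e ∈ w.edges}}

/-- The cycles of length `i` of `G`, identified with their edge sets. -/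
def SimpleGraph.cycleSetLen (G : SimpleGraph V) (i : ℕ) : Set (Set (Sym2 V)) :=
  {s | ∃ (v : V) (w : G.Walk v v), w.IsCycle ∧ w.length = i ∧ s = {e | e ∈ w.edges}}

/-- The cycles of length `i` of `G` passing through `v`, identified with their edge sets. -/
def SimpleGraph.cycleSetLenThrough (G : SimpleGraph V) (i : ℕ) (v : V) : Set (Set (Sym2 V)) :=
  {s | ∃ w : G.Walk v v, w.IsCycle ∧ w.length = i ∧ s = {e | e ∈ w.edges}}

/-- The set of vertices at distance exactly `d` from `u`. -/
def SimpleGraph.sphere (G : SimpleGraph V) (u : V) (d : ℕ) : Set V :=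
  {w | G.Reachable u w ∧ G.dist u w = d}

open Finset

section DoubleCharge

variable {τ α β : Type*} [DecidableEq α] [DecidableEq β]

/-- Twice the charge received by `a` when every `t ∈ T` sends charge `1 / #(g-fiber of t)` to
`f t`, as long as all `g`-fibers have at most two elements. -/
def doubleCharge (T : Finset τ) (f : τ → α) (g : τ → β) (a : α) : ℕ :=
  ∑ t ∈ T with f t = a, if #{s ∈ T | g s = g t} = 1 then 2 else 1

theorem three_mul_card_le_two_mul_card_of_doubleCharge {T : Finset τ} {A : Finset α}
    {B : Finset β} {f : τ → α} {g : τ → β} (hg : ∀ t ∈ T, g t ∈ B)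
    (hB : ∀ b ∈ B, #{t ∈ T | g t = b} ≤ 2) (hA : ∀ a ∈ A, 3 ≤ doubleCharge T f g a) :
    3 * #A ≤ 2 * #B := by
  set w : τ → ℕ := fun t => if #{s ∈ T | g s = g t} = 1 then 2 else 1
  calc 3 * #A = ∑ _a ∈ A, 3 := by rw [sum_const, smul_eq_mul, mul_comm]
    _ ≤ ∑ a ∈ A, doubleCharge T f g a := sum_le_sum hA
    _ = ∑ t ∈ T with f t ∈ A, w t := sum_fiberwise_eq_sum_filter _ _ _ _
    _ ≤ ∑ t ∈ T, w t := sum_le_sum_of_subset (filter_subset _ _)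
    _ = ∑ b ∈ B, ∑ t ∈ T with g t = b, w t := (sum_fiberwise_of_maps_to hg _).symm
    _ ≤ ∑ _b ∈ B, 2 := sum_le_sum fun b hb => ?_
    _ = 2 * #B := by rw [sum_const, smul_eq_mul, mul_comm]
  have hw : ∀ t ∈ T.filter (g · = b), w t = if #{s ∈ T | g s = b} = 1 then 2 else 1 :=
    fun t ht => by simp only [w, (mem_filter.mp ht).2]
  rw [sum_congr rfl hw, sum_const, smul_eq_mul]
  have := hB b hb
  split_ifs <;> omega

lemma three_le_doubleCharge_of_three {T : Finset τ} {f : τ → α} {g : τ → β} {a : α}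
    {t₁ t₂ t₃ : τ} (h₁ : t₁ ∈ T) (h₂ : t₂ ∈ T) (h₃ : t₃ ∈ T) (hf₁ : f t₁ = a) (hf₂ : f t₂ = a)
    (hf₃ : f t₃ = a) (h₁₂ : t₁ ≠ t₂) (h₁₃ : t₁ ≠ t₃) (h₂₃ : t₂ ≠ t₃) :
    3 ≤ doubleCharge T f g a := by
  have hcard : 3 ≤ #{t ∈ T | f t = a} :=
    two_lt_card.mpr ⟨t₁, by simp [*], t₂, by simp [*], t₃, by simp [*], h₁₂, h₁₃, h₂₃⟩
  refine hcard.trans ?_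
  rw [card_eq_sum_ones, doubleCharge]
  exact sum_le_sum fun t _ => by split_ifs <;> omega

lemma three_le_doubleCharge_of_two {T : Finset τ} {f : τ → α} {g : τ → β} {a : α}
    {t₁ t₂ : τ} (h₁ : t₁ ∈ T) (h₂ : t₂ ∈ T) (hf₁ : f t₁ = a) (hf₂ : f t₂ = a) (h₁₂ : t₁ ≠ t₂)
    (hpriv : #{s ∈ T | g s = g t₁} = 1) : 3 ≤ doubleCharge T f g a := by
  classical
  calc 3 ≤ ∑ t ∈ {t₁, t₂}, if #{s ∈ T | g s = g t} = 1 then 2 else 1 := by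
        rw [sum_pair h₁₂, if_pos hpriv]; split_ifs <;> omega
    _ ≤ doubleCharge T f g a :=
        sum_le_sum_of_subset (insert_subset_iff.mpr ⟨by simp [*], by simp [*]⟩)

end DoubleCharge

namespace SimpleGraph

variable {G : SimpleGraph V}

namespace Walk

lemma IsPath.append {a b c : V} {p : G.Walk a b} {q : G.Walk b c} (hp : p.IsPath)
    (hq : q.IsPath) (hpq : ∀ x ∈ p.support, x ∈ q.support → x = b) : (p.append q).IsPath := by
  rw [isPath_def, support_append]
  refine hp.support_nodup.append hq.support_nodup.tail fun x hxp hxq => ?_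
  obtain rfl := hpq x hxp (List.mem_of_mem_tail hxq)
  have hq' := hq.support_nodup
  rw [← cons_tail_support] at hq'
  exact (List.nodup_cons.mp hq').1 hxq

lemma IsPath.eq_of_mem_support_of_append {a b c x : V} {p : G.Walk a b} {q : G.Walk b c}
    (h : (p.append q).IsPath) (hp : x ∈ p.support) (hq : x ∈ q.support) : x = b := by
  by_contra hxb
  exact h.ne_of_mem_support_of_append hxb hp hq rfl

lemma exists_append_eq_of_end_mem {a b : V} (p : G.Walk a b) (S : Set V) (hb : b ∈ S) :
    ∃ c ∈ S, ∃ (p₁ : G.Walk a c) (p₂ : G.Walk c b),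
      p₁.append p₂ = p ∧ ∀ x ∈ p₁.support, x ∈ S → x = c := by
  induction p with
  | nil => exact ⟨_, hb, nil, nil, rfl, by simp⟩
  | @cons a a' b h p ih =>
    by_cases ha : a ∈ S
    · exact ⟨a, ha, nil, cons h p, rfl, by simp⟩
    · obtain ⟨c, hc, p₁, p₂, rfl, hfirst⟩ := ih hb
      refine ⟨c, hc, cons h p₁, p₂, rfl, ?_⟩
      rintro x hx hxS
      rcases (mem_support_iff _).mp hx with rfl | hx
      · exact absurd hxS ha
      · exact hfirst x hx hxS

end Walk

open Walk

lemma exists_diamond_of_disjoint_paths {v c x y z : V} (hvc : v ≠ c) (hx : G.Adj v x)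
    (hy : G.Adj v y) (hz : G.Adj v z) (hxy : x ≠ y) (hxz : x ≠ z) (hyz : y ≠ z) {p : G.Walk x c}
    {q : G.Walk y c} {r : G.Walk z c} (hp : p.IsPath) (hq : q.IsPath) (hr : r.IsPath)
    (hvp : v ∉ p.support) (hvq : v ∉ q.support) (hvr : v ∉ r.support)
    (hpq : ∀ t ∈ p.support, t ∈ q.support → t = c)
    (hpr : ∀ t ∈ p.support, t ∈ r.support → t = c) (hqr : ∀ t ∈ q.support, t ∈ r.support → t = c) :
    ∃ D : G.Diamond, D.size = p.length + q.length + r.length + 3 := by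
  have disj : ∀ {x' y' : V} (h : G.Adj v x') (h' : G.Adj v y') {p' : G.Walk x' c}
      {q' : G.Walk y' c}, (∀ t ∈ p'.support, t ∈ q'.support → t = c) →
      ∀ t ∈ (cons h p').support, t ∈ (cons h' q').support → t = v ∨ t = c := by
    intro _ _ _ _ _ _ hpq' t ht ht'
    rw [support_cons, List.mem_cons] at ht ht'
    rcases ht with rfl | ht
    · exact .inl rfl
    rcases ht' with rfl | ht'
    · exact .inl rfl
    exact .inr (hpq' t ht ht')
  refine ⟨⟨v, c, hvc, cons hx p, cons hy q, cons hz r, hp.cons hvp, hq.cons hvq, hr.cons hvr,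
    fun h => hxy (by injection h), fun h => hxz (by injection h), fun h => hyz (by injection h),
    disj hx hy hpq, disj hx hz hpr, disj hy hz hqr⟩, ?_⟩
  simp only [Diamond.size, length_cons]
  omega

/-- The paths `v x ⋯ a` and `v y ⋯ a` form a cycle through `v`; a path from a third neighbour `z`
of `v` meeting that cycle first at `c` (on the `x`-side) splits it into the two other branches of a
diamond with ends `v` and `c`. -/
lemma exists_diamond_of_cycle_of_mem_left {v x y z a c : V} (hx : G.Adj v x) (hy : G.Adj v y)
    (hz : G.Adj v z) (hxy : x ≠ y) (hxz : x ≠ z) (hyz : y ≠ z) {p : G.Walk x a}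
    {q : G.Walk y a} {r : G.Walk z c} (hp : p.IsPath) (hq : q.IsPath) (hr : r.IsPath)
    (hvp : v ∉ p.support) (hvq : v ∉ q.support) (hvr : v ∉ r.support)
    (hpq : ∀ t ∈ p.support, t ∈ q.support → t = a) (hc : c ∈ p.support)
    (hr_first : ∀ t ∈ r.support, t ∈ p.support ∨ t ∈ q.support → t = c) :
    ∃ D : G.Diamond, D.size = p.length + q.length + r.length + 3 := by
  obtain ⟨p₁, p₂, rfl⟩ := p.mem_support_iff_exists_append.mp hc
  simp only [mem_support_append_iff] at hvp hpq hr_first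
  have hp₂ : ∀ t ∈ p₂.reverse.support, t ∈ p₂.support := by simp
  have hp₁₂ : ∀ t ∈ p₁.support, t ∈ p₂.reverse.support → t = c := fun t h₁ h₂ =>
    hp.eq_of_mem_support_of_append h₁ (hp₂ t h₂)
  have hq₂ : (q.append p₂.reverse).IsPath :=
    hq.append hp.of_append_right.reverse fun t htq htp => hpq t (.inr (hp₂ t htp)) htq
  have hvq₂ : v ∉ (q.append p₂.reverse).support := by
    rw [mem_support_append_iff]
    exact fun h => h.elim hvq fun h => hvp (.inr (hp₂ v h))
  obtain ⟨D, hD⟩ :=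
    exists_diamond_of_disjoint_paths (by rintro rfl; exact hvp (.inl p₁.end_mem_support))
    hx hz hy hxz hxy hyz.symm hp.of_append_left hr hq₂ (fun h => hvp (.inl h)) hvr hvq₂
    (fun t h₁ h₂ => hr_first t h₂ (.inl (.inl h₁)))
    (fun t h₁ h₂ => by
      rcases (mem_support_append_iff _ _).mp h₂ with h₂ | h₂
      · obtain rfl := hpq t (.inl h₁) h₂
        exact hp₁₂ t h₁ (by simp)
      · exact hp₁₂ t h₁ h₂)
    (fun t h₁ h₂ => by
      rcases (mem_support_append_iff _ _).mp h₂ with h₂ | h₂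
      · exact hr_first t h₁ (.inr h₂)
      · exact hr_first t h₁ (.inl (.inr (hp₂ t h₂))))
  refine ⟨D, hD.trans ?_⟩
  simp only [length_append, length_reverse]
  omega

lemma exists_diamond_of_cycle {v x y z a : V} (hx : G.Adj v x) (hy : G.Adj v y)
    (hz : G.Adj v z) (hxy : x ≠ y) (hxz : x ≠ z) (hyz : y ≠ z) {p : G.Walk x a}
    {q : G.Walk y a} (hp : p.IsPath) (hq : q.IsPath) (hvp : v ∉ p.support) (hvq : v ∉ q.support)
    (hpq : ∀ t ∈ p.support, t ∈ q.support → t = a) (r : G.Walk z a) (hvr : v ∉ r.support) :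
    ∃ D : G.Diamond, D.size ≤ p.length + q.length + r.length + 3 := by
  classical
  obtain ⟨c, hc, r₁, r₂, rfl, hr₁⟩ :=
    r.exists_append_eq_of_end_mem {t | t ∈ p.support ∨ t ∈ q.support} (.inl p.end_mem_support)
  have hvr₁ : v ∉ r₁.bypass.support := fun h =>
    hvr ((mem_support_append_iff _ _).mpr (.inl (r₁.support_bypass_subset_support h)))
  have hfirst : ∀ t ∈ r₁.bypass.support, t ∈ p.support ∨ t ∈ q.support → t = c :=
    fun t ht => hr₁ t (r₁.support_bypass_subset_support ht)
  have hlen : r₁.bypass.length ≤ (r₁.append r₂).length := by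
    rw [length_append]; exact (r₁.length_bypass_le_length).trans (Nat.le_add_right _ _)
  rcases hc with hc | hc
  · obtain ⟨D, hD⟩ := exists_diamond_of_cycle_of_mem_left hx hy hz hxy hxz hyz hp hq
      r₁.bypass_isPath hvp hvq hvr₁ hpq hc hfirst
    exact ⟨D, by omega⟩
  · obtain ⟨D, hD⟩ := exists_diamond_of_cycle_of_mem_left hy hx hz hxy.symm hyz hxz hq hp
      r₁.bypass_isPath hvq hvp hvr₁ (fun t h h' => hpq t h' h) hc
      (fun t ht h => hfirst t ht h.symm)
    exact ⟨D, by omega⟩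

theorem exists_diamond_of_three_walks {v x y z u : V} (hx : G.Adj v x) (hy : G.Adj v y)
    (hz : G.Adj v z) (hxy : x ≠ y) (hxz : x ≠ z) (hyz : y ≠ z) (p : G.Walk x u)
    (q : G.Walk y u) (r : G.Walk z u) (hvp : v ∉ p.support) (hvq : v ∉ q.support)
    (hvr : v ∉ r.support) :
    ∃ D : G.Diamond, D.size ≤ p.length + q.length + r.length + 3 := by
  classical
  -- `q` stopped where it first meets `p` closes a cycle through `v`; `r` followed back along `p`
  -- ends on that cycle.
  obtain ⟨a, ha, q₁, q₂, hq, hq₁⟩ :=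
    q.bypass.exists_append_eq_of_end_mem {t | t ∈ p.bypass.support} p.bypass.end_mem_support
  obtain ⟨p₁, p₂, hp⟩ := p.bypass.mem_support_iff_exists_append.mp ha
  have hp_path : (p₁.append p₂).IsPath := hp ▸ p.bypass_isPath
  have hvp' : ∀ t, t ∈ p₁.support ∨ t ∈ p₂.support → t ∈ p.support := fun t ht =>
    p.support_bypass_subset_support (hp ▸ (mem_support_append_iff _ _).mpr ht)
  have hvq₁ : v ∉ q₁.bypass.support := fun h => hvq <| q.support_bypass_subset_support <|
    hq ▸ (mem_support_append_iff _ _).mpr (.inl (q₁.support_bypass_subset_support h))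
  have hvr' : v ∉ (r.append p₂.reverse).support := by
    rw [mem_support_append_iff, support_reverse, List.mem_reverse]
    exact fun h => h.elim hvr fun h => hvp (hvp' v (.inr h))
  obtain ⟨D, hD⟩ := exists_diamond_of_cycle hx hy hz hxy hxz hyz hp_path.of_append_left
    q₁.bypass_isPath (fun h => hvp (hvp' v (.inl h))) hvq₁
    (fun t ht ht' => hq₁ t (q₁.support_bypass_subset_support ht')
      (hp ▸ (mem_support_append_iff _ _).mpr (.inl ht)))
    _ hvr'
  refine ⟨D, hD.trans ?_⟩
  have h₁ := congrArg length hp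
  have h₂ := congrArg length hq
  simp only [length_append, length_reverse] at h₁ h₂ ⊢
  have := p.length_bypass_le_length
  have := q.length_bypass_le_length
  have := q₁.length_bypass_le_length
  omega

def ReachableAvoiding (G : SimpleGraph V) (x : V) (n : ℕ) (a b : V) : Prop :=
  ∃ p : G.Walk a b, p.length ≤ n ∧ x ∉ p.support

lemma ReachableAvoiding.mono {x a b : V} {m n : ℕ} (h : G.ReachableAvoiding x m a b)
    (hmn : m ≤ n) : G.ReachableAvoiding x n a b :=
  let ⟨p, hp, hx⟩ := h
  ⟨p, hp.trans hmn, hx⟩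

lemma ReachableAvoiding.cons {x a a' b : V} {n : ℕ} (h : G.Adj a a') (hax : a ≠ x)
    (h' : G.ReachableAvoiding x n a' b) : G.ReachableAvoiding x (n + 1) a b :=
  let ⟨p, hp, hx⟩ := h'
  ⟨Walk.cons h p, by simpa using hp, by simpa [support_cons, Ne.symm hax] using hx⟩

theorem lt_of_reachableAvoiding {N : ℕ} (hno : ¬ ∃ D : G.Diamond, D.size ≤ N)
    {v x y z u : V} {l m n : ℕ} (hx : G.Adj v x) (hy : G.Adj v y) (hz : G.Adj v z)
    (hxy : x ≠ y) (hxz : x ≠ z) (hyz : y ≠ z) (h₁ : G.ReachableAvoiding v l x u)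
    (h₂ : G.ReachableAvoiding v m y u) (h₃ : G.ReachableAvoiding v n z u) :
    N < l + m + n + 3 := by
  obtain ⟨p, hp, hvp⟩ := h₁
  obtain ⟨q, hq, hvq⟩ := h₂
  obtain ⟨r, hr, hvr⟩ := h₃
  obtain ⟨D, hD⟩ := exists_diamond_of_three_walks hx hy hz hxy hxz hyz p q r hvp hvq hvr
  by_contra! hN
  exact hno ⟨D, by omega⟩

section Levels

variable {u : V} {N : ℕ}

lemma reachableAvoiding_dist {w x : V} (hw : G.Reachable u w) (hxw : x ≠ w)
    (hle : G.dist u w ≤ G.dist u x + 1) (hadj : G.dist u w = G.dist u x + 1 → ¬ G.Adj x w) :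
    G.ReachableAvoiding x (G.dist u w) w u := by
  obtain ⟨p, hp⟩ := hw.exists_walk_length_eq_dist
  refine ⟨p.reverse, by simp [hp], fun hx => ?_⟩
  obtain ⟨p₁, p₂, rfl⟩ := p.mem_support_iff_exists_append.mp (by simpa using hx)
  have h₁ := dist_le p₁
  have h₂ : p₂.length ≠ 0 := fun h => hxw (eq_of_length_eq_zero h)
  rw [length_append] at hp
  exact hadj (by omega) (adj_of_length_eq_one (p := p₂) (by omega))

lemma lt_of_two_lower_of_reachableAvoiding (hno : ¬ ∃ D : G.Diamond, D.size ≤ N) {x a b c : V}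
    {n : ℕ} (hx : G.Reachable u x) (ha : G.Adj x a) (hb : G.Adj x b) (hc : G.Adj x c)
    (hab : a ≠ b) (hac : a ≠ c) (hbc : b ≠ c) (ha' : G.dist u a ≤ G.dist u x)
    (hb' : G.dist u b ≤ G.dist u x) (hc' : G.ReachableAvoiding x n c u) :
    N < G.dist u a + G.dist u b + n + 3 :=
  lt_of_reachableAvoiding hno ha hb hc hab hac hbc
    (reachableAvoiding_dist (hx.trans ha.reachable) ha.ne (by omega) (by omega))
    (reachableAvoiding_dist (hx.trans hb.reachable) hb.ne (by omega) (by omega)) hc'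

lemma lt_of_three_lower (hno : ¬ ∃ D : G.Diamond, D.size ≤ N) {x a b c : V}
    (hx : G.Reachable u x) (ha : G.Adj x a) (hb : G.Adj x b) (hc : G.Adj x c)
    (hab : a ≠ b) (hac : a ≠ c) (hbc : b ≠ c) (ha' : G.dist u a ≤ G.dist u x)
    (hb' : G.dist u b ≤ G.dist u x) (hc' : G.dist u c ≤ G.dist u x) :
    N < G.dist u a + G.dist u b + G.dist u c + 3 :=
  lt_of_two_lower_of_reachableAvoiding hno hx ha hb hc hab hac hbc ha' hb'
    (reachableAvoiding_dist (hx.trans hc.reachable) hc.ne (by omega) (by omega))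

lemma eq_of_two_lower_of_adj (hno : ¬ ∃ D : G.Diamond, D.size ≤ N) {x a b q w : V}
    (hx : G.Reachable u x) (ha : G.Adj x a) (hb : G.Adj x b) (hab : a ≠ b)
    (ha' : G.dist u a ≤ G.dist u x) (hb' : G.dist u b ≤ G.dist u x) (hq : G.Adj x q)
    (hq' : G.dist u q = G.dist u x + 1) (hw : G.Adj q w) (hw' : G.dist u w = G.dist u x)
    (hN : G.dist u a + G.dist u b + G.dist u x + 4 ≤ N) : w = x := by
  by_contra hwx
  have hq_esc := (reachableAvoiding_dist ((hx.trans hq.reachable).trans hw.reachable)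
    (Ne.symm hwx) (by omega) (by omega)).cons hw hq.ne'
  have := lt_of_two_lower_of_reachableAvoiding hno hx ha hb hq hab (by rintro rfl; omega)
    (by rintro rfl; omega) ha' hb' hq_esc
  omega

end Levels

noncomputable def lowerNeighbors (G : SimpleGraph V) [Fintype V] [DecidableRel G.Adj] (u x : V) :
    Finset V :=
  {y ∈ G.neighborFinset x | G.dist u y ≤ G.dist u x}

noncomputable def upperNeighbors (G : SimpleGraph V) [Fintype V] [DecidableRel G.Adj] (u x : V) :
    Finset V :=
  {y ∈ G.neighborFinset x | G.dist u x < G.dist u y}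

section Layers

variable [Fintype V] [DecidableRel G.Adj] {u x y : V} {N : ℕ}

@[simp]
lemma mem_lowerNeighbors : y ∈ G.lowerNeighbors u x ↔ G.Adj x y ∧ G.dist u y ≤ G.dist u x := by
  simp [lowerNeighbors]

@[simp]
lemma mem_upperNeighbors : y ∈ G.upperNeighbors u x ↔ G.Adj x y ∧ G.dist u x < G.dist u y := by
  simp [upperNeighbors]

lemma card_lowerNeighbors_add_card_upperNeighbors (u x : V) :
    #(G.lowerNeighbors u x) + #(G.upperNeighbors u x) = G.degree x := by
  rw [← card_neighborFinset_eq_degree,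
    ← card_filter_add_card_filter_not (s := G.neighborFinset x)
      (fun y => G.dist u y ≤ G.dist u x)]
  simp only [lowerNeighbors, upperNeighbors, not_le]

lemma dist_eq_of_mem_upperNeighbors (hy : y ∈ G.upperNeighbors u x) :
    G.dist u y = G.dist u x + 1 := by
  rw [mem_upperNeighbors] at hy
  rcases hy.1.diff_dist_adj (u := u) with h | h | h <;> omega

lemma card_lowerNeighbors_le_two (hno : ¬ ∃ D : G.Diamond, D.size ≤ N) (hx : G.Reachable u x)
    (hN : 3 * G.dist u x + 3 ≤ N) : #(G.lowerNeighbors u x) ≤ 2 := by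
  by_contra! h
  obtain ⟨a, ha, b, hb, c, hc, hab, hac, hbc⟩ := two_lt_card.mp h
  rw [mem_lowerNeighbors] at ha hb hc
  have := lt_of_three_lower hno hx ha.1 hb.1 hc.1 hab hac hbc ha.2 hb.2 hc.2
  omega

lemma one_lt_card_lowerNeighbors (hdeg : 3 ≤ G.degree x) (hup : #(G.upperNeighbors u x) ≤ 1) :
    1 < #(G.lowerNeighbors u x) := by
  have := card_lowerNeighbors_add_card_upperNeighbors (G := G) u x
  omega

lemma upperNeighbors_nonempty (hno : ¬ ∃ D : G.Diamond, D.size ≤ N) (hx : G.Reachable u x)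
    (hN : 3 * G.dist u x + 3 ≤ N) (hdeg : 3 ≤ G.degree x) : (G.upperNeighbors u x).Nonempty := by
  have := card_lowerNeighbors_add_card_upperNeighbors (G := G) u x
  have := card_lowerNeighbors_le_two hno hx hN
  rw [← card_pos]
  omega

lemma reachableAvoiding_of_mem_lowerNeighbors (hx : G.Reachable u x)
    (hy : y ∈ G.upperNeighbors u x) {z : V} (hz : z ∈ G.lowerNeighbors u y) (hzx : z ≠ x)
    (hz' : z ∉ G.upperNeighbors u x) : G.ReachableAvoiding x (G.dist u x + 2) y u := by
  have hyx := dist_eq_of_mem_upperNeighbors hy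
  rw [mem_upperNeighbors] at hy hz'
  rw [mem_lowerNeighbors] at hz
  have := hz.1.diff_dist_adj (u := u)
  refine ((reachableAvoiding_dist ((hx.trans hy.1.reachable).trans hz.1.reachable) (Ne.symm hzx)
    (by omega) fun h hadj => hz' ⟨hadj, by omega⟩).cons hz.1 hy.1.ne').mono (by omega)

/-- As `w` is its only child, `v` has two lower neighbours; with them a walk as excluded here would
give a diamond of size at most `3k + 6`. -/
lemma not_reachableAvoiding_of_upperNeighbors_eq_singleton {v w : V} {k : ℕ}
    (hno : ¬ ∃ D : G.Diamond, D.size ≤ 3 * k + 8) (hdeg : 3 ≤ G.degree v) (hv : G.Reachable u v)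
    (hvk : G.dist u v = k) (hup : G.upperNeighbors u v = {w}) :
    ¬ G.ReachableAvoiding v (k + 3) w u := by
  intro hesc
  obtain ⟨a, ha, b, hb, hab⟩ :=
    one_lt_card.mp (one_lt_card_lowerNeighbors (u := u) hdeg (by simp [hup]))
  have hvw : w ∈ G.upperNeighbors u v := by simp [hup]
  have hwk := dist_eq_of_mem_upperNeighbors hvw
  rw [mem_upperNeighbors] at hvw
  rw [mem_lowerNeighbors] at ha hb
  have := lt_of_two_lower_of_reachableAvoiding hno hv ha.1 hb.1 hvw.1 hab (by rintro rfl; omega)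
    (by rintro rfl; omega) ha.2 hb.2 hesc
  omega

end Layers

open Classical in
noncomputable def ascents (G : SimpleGraph V) [Fintype V] (u : V) (k : ℕ) :
    Finset (V × V × V) :=
  {t | G.Reachable u t.1 ∧ G.dist u t.1 = k ∧ G.Adj t.1 t.2.1 ∧ G.dist u t.2.1 = k + 1 ∧
    G.Adj t.2.1 t.2.2 ∧ G.dist u t.2.2 = k + 2}

section Ascents

variable [Fintype V] {u v w : V} {k : ℕ}

@[simp]
lemma mem_ascents {q : V} : (v, w, q) ∈ G.ascents u k ↔ G.Reachable u v ∧ G.dist u v = k ∧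
    G.Adj v w ∧ G.dist u w = k + 1 ∧ G.Adj w q ∧ G.dist u q = k + 2 := by
  simp [ascents]

lemma mem_ascents_of_mem_upperNeighbors [DecidableRel G.Adj] {q : V} (hv : G.Reachable u v)
    (hvk : G.dist u v = k) (hw : w ∈ G.upperNeighbors u v) (hq : q ∈ G.upperNeighbors u w) :
    (v, w, q) ∈ G.ascents u k := by
  have := dist_eq_of_mem_upperNeighbors hw
  have := dist_eq_of_mem_upperNeighbors hq
  rw [mem_upperNeighbors] at hw hq
  rw [mem_ascents]
  exact ⟨hv, hvk, hw.1, by omega, hq.1, by omega⟩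

lemma exists_mem_ascents [DecidableRel G.Adj] (hno : ¬ ∃ D : G.Diamond, D.size ≤ 3 * k + 8)
    (hdeg : 3 ≤ G.degree w) (hv : G.Reachable u v) (hvk : G.dist u v = k)
    (hw : w ∈ G.upperNeighbors u v) : ∃ q, (v, w, q) ∈ G.ascents u k := by
  have := dist_eq_of_mem_upperNeighbors hw
  obtain ⟨q, hq⟩ := upperNeighbors_nonempty hno (hv.trans (mem_upperNeighbors.mp hw).1.reachable)
    (by omega) hdeg
  exact ⟨q, mem_ascents_of_mem_upperNeighbors hv hvk hw hq⟩

lemma card_filter_ascents_le_two [DecidableEq V] (hno : ¬ ∃ D : G.Diamond, D.size ≤ 3 * k + 8)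
    (q : V) : #{t ∈ G.ascents u k | t.2.2 = q} ≤ 2 := by
  by_contra! h
  obtain ⟨⟨v₁, w₁, q₁⟩, h₁, ⟨v₂, w₂, q₂⟩, h₂, ⟨v₃, w₃, q₃⟩, h₃, h₁₂, h₁₃, h₂₃⟩ := two_lt_card.mp h
  simp only [mem_filter, mem_ascents] at h₁ h₂ h₃
  obtain ⟨⟨hv₁, hv₁k, hvw₁, hw₁k, hwq₁, hqk⟩, hq₁⟩ := h₁
  obtain ⟨⟨hv₂, hv₂k, hvw₂, hw₂k, hwq₂, -⟩, hq₂⟩ := h₂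
  obtain ⟨⟨hv₃, hv₃k, hvw₃, hw₃k, hwq₃, -⟩, hq₃⟩ := h₃
  subst q₁ q₂ q₃
  have same_mid : ∀ {v v' w w' : V}, G.Reachable u v → G.Adj v w → G.Adj v' w →
      G.dist u v = k → G.dist u v' = k → G.dist u w = k + 1 → G.Adj w q → v ≠ v' →
      G.Adj q w' → G.dist u w' = k + 1 → w' = w :=
    fun hv hvw hv'w hvk hv'k hwk hwq hvv' hqw' hw'k =>
      eq_of_two_lower_of_adj hno (hv.trans hvw.reachable) hvw.symm hv'w.symm hvv' (by omega)
        (by omega) hwq (by omega) hqw' (by omega) (by omega)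
  rcases eq_or_ne w₁ w₂ with rfl | hw₁₂
  · have hv₁₂ : v₁ ≠ v₂ := by rintro rfl; exact h₁₂ rfl
    obtain rfl := same_mid hv₁ hvw₁ hvw₂ hv₁k hv₂k hw₁k hwq₁ hv₁₂ hwq₃.symm hw₃k
    have hv₁₃ : v₁ ≠ v₃ := by rintro rfl; exact h₁₃ rfl
    have hv₂₃ : v₂ ≠ v₃ := by rintro rfl; exact h₂₃ rfl
    have := lt_of_three_lower hno (hv₁.trans hvw₁.reachable) hvw₁.symm hvw₂.symm hvw₃.symm
      hv₁₂ hv₁₃ hv₂₃ (by omega) (by omega) (by omega)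
    omega
  rcases eq_or_ne w₁ w₃ with rfl | hw₁₃
  · have hv₁₃ : v₁ ≠ v₃ := by rintro rfl; exact h₁₃ rfl
    exact hw₁₂ (same_mid hv₁ hvw₁ hvw₃ hv₁k hv₃k hw₁k hwq₁ hv₁₃ hwq₂.symm hw₂k).symm
  rcases eq_or_ne w₂ w₃ with rfl | hw₂₃
  · have hv₂₃ : v₂ ≠ v₃ := by rintro rfl; exact h₂₃ rfl
    exact hw₁₂ (same_mid hv₂ hvw₂ hvw₃ hv₂k hv₃k hw₂k hwq₂ hv₂₃ hwq₁.symm hw₁k)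
  have := lt_of_three_lower hno ((hv₁.trans hvw₁.reachable).trans hwq₁.reachable) hwq₁.symm
    hwq₂.symm hwq₃.symm hw₁₂ hw₁₃ hw₂₃ (by omega) (by omega) (by omega)
  omega

lemma card_filter_ascents_eq_one [DecidableEq V] {q : V} (h : (v, w, q) ∈ G.ascents u k)
    (hw : ∀ w', G.Adj q w' → G.dist u w' = k + 1 → w' = w)
    (hv : ∀ v', G.Adj w v' → G.dist u v' = k → v' = v) :
    #{t ∈ G.ascents u k | t.2.2 = q} = 1 := by
  rw [card_eq_one]
  refine ⟨(v, w, q), eq_singleton_iff_unique_mem.mpr ⟨mem_filter.mpr ⟨h, rfl⟩, ?_⟩⟩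
  rintro ⟨v', w', q'⟩ ht
  simp only [mem_filter, mem_ascents] at ht
  obtain ⟨⟨-, hv'k, hv'w', hw'k, hw'q, -⟩, rfl⟩ := ht
  obtain rfl := hw w' hw'q.symm hw'k
  obtain rfl := hv v' hv'w'.symm hv'k
  rfl

end Ascents

section Charge

variable [Fintype V] [DecidableEq V] [DecidableRel G.Adj] {u v w w' : V} {k : ℕ}

lemma three_le_doubleCharge_of_three_upper (hno : ¬ ∃ D : G.Diamond, D.size ≤ 3 * k + 8)
    (hdeg : ∀ x, 3 ≤ G.degree x) (hv : G.Reachable u v) (hvk : G.dist u v = k) {w₁ w₂ w₃ : V}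
    (h₁ : w₁ ∈ G.upperNeighbors u v) (h₂ : w₂ ∈ G.upperNeighbors u v)
    (h₃ : w₃ ∈ G.upperNeighbors u v) (h₁₂ : w₁ ≠ w₂) (h₁₃ : w₁ ≠ w₃) (h₂₃ : w₂ ≠ w₃) :
    3 ≤ doubleCharge (G.ascents u k) Prod.fst (fun t => t.2.2) v := by
  obtain ⟨q₁, hq₁⟩ := exists_mem_ascents hno (hdeg w₁) hv hvk h₁
  obtain ⟨q₂, hq₂⟩ := exists_mem_ascents hno (hdeg w₂) hv hvk h₂
  obtain ⟨q₃, hq₃⟩ := exists_mem_ascents hno (hdeg w₃) hv hvk h₃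
  exact three_le_doubleCharge_of_three hq₁ hq₂ hq₃ rfl rfl rfl (by simp [h₁₂]) (by simp [h₁₃])
    (by simp [h₂₃])

lemma three_le_doubleCharge_of_one_lt_card (hno : ¬ ∃ D : G.Diamond, D.size ≤ 3 * k + 8)
    (hdeg : ∀ x, 3 ≤ G.degree x) (hv : G.Reachable u v) (hvk : G.dist u v = k)
    (hw : w ∈ G.upperNeighbors u v) (hw' : w' ∈ G.upperNeighbors u v) (hne : w ≠ w')
    (hcard : 1 < #(G.upperNeighbors u w)) :
    3 ≤ doubleCharge (G.ascents u k) Prod.fst (fun t => t.2.2) v := by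
  obtain ⟨q₁, hq₁, q₂, hq₂, hq₁₂⟩ := one_lt_card.mp hcard
  obtain ⟨q₃, hq₃⟩ := exists_mem_ascents hno (hdeg w') hv hvk hw'
  exact three_le_doubleCharge_of_three (mem_ascents_of_mem_upperNeighbors hv hvk hw hq₁)
    (mem_ascents_of_mem_upperNeighbors hv hvk hw hq₂) hq₃ rfl rfl rfl (by simp [hq₁₂])
    (by simp [hne]) (by simp [hne])

lemma adj_or_reachableAvoiding_of_upperNeighbors_eq_pair (hdeg : 3 ≤ G.degree w)
    (hv : G.Reachable u v) (hvk : G.dist u v = k) (hup : G.upperNeighbors u v = {w, w'})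
    (hw : #(G.upperNeighbors u w) ≤ 1) : G.Adj w w' ∨ G.ReachableAvoiding v (k + 2) w u := by
  obtain ⟨z, hz, hzv⟩ := exists_mem_ne (one_lt_card_lowerNeighbors hdeg hw) v
  by_cases hz' : z ∈ G.upperNeighbors u v
  · rw [hup, mem_insert, mem_singleton] at hz'
    rcases hz' with rfl | rfl
    · exact (G.irrefl (mem_lowerNeighbors.mp hz).1).elim
    · exact .inl (mem_lowerNeighbors.mp hz).1
  · exact .inr (hvk ▸ reachableAvoiding_of_mem_lowerNeighbors hv (by simp [hup]) hz hzv hz')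

/-- Otherwise `w` and `w'` reach `u` avoiding `v` within `k + 2` steps through their second lower
neighbours, and a lower neighbour of `v` completes a diamond of size at most `3k + 7`. -/
lemma adj_of_upperNeighbors_eq_pair (hno : ¬ ∃ D : G.Diamond, D.size ≤ 3 * k + 8)
    (hdeg : ∀ x, 3 ≤ G.degree x) (hv : G.Reachable u v) (hvk : G.dist u v = k)
    (hup : G.upperNeighbors u v = {w, w'}) (hne : w ≠ w') (hw : #(G.upperNeighbors u w) ≤ 1)
    (hw' : #(G.upperNeighbors u w') ≤ 1) : G.Adj w w' := by
  rcases adj_or_reachableAvoiding_of_upperNeighbors_eq_pair (hdeg w) hv hvk hup hw with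
    h | hw_esc
  · exact h
  rcases adj_or_reachableAvoiding_of_upperNeighbors_eq_pair (hdeg w') hv hvk
    (pair_comm w w' ▸ hup) hw' with h | hw'_esc
  · exact h.symm
  obtain ⟨n, hn⟩ : (G.lowerNeighbors u v).Nonempty := by
    have := card_lowerNeighbors_add_card_upperNeighbors (G := G) u v
    rw [hup, card_pair hne] at this
    have := hdeg v
    rw [← card_pos]
    omega
  have hvw : w ∈ G.upperNeighbors u v := by simp [hup]
  have hvw' : w' ∈ G.upperNeighbors u v := by simp [hup]
  have hwk := dist_eq_of_mem_upperNeighbors hvw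
  have hw'k := dist_eq_of_mem_upperNeighbors hvw'
  rw [mem_upperNeighbors] at hvw hvw'
  rw [mem_lowerNeighbors] at hn
  have := lt_of_reachableAvoiding hno hn.1 hvw.1 hvw'.1 (by rintro rfl; omega)
    (by rintro rfl; omega) hne
    (reachableAvoiding_dist (hv.trans hn.1.reachable) hn.1.ne (by omega) (by omega))
    hw_esc hw'_esc
  omega

lemma three_le_doubleCharge_of_upperNeighbors_eq_pair
    (hno : ¬ ∃ D : G.Diamond, D.size ≤ 3 * k + 8) (hdeg : ∀ x, 3 ≤ G.degree x)
    (hv : G.Reachable u v) (hvk : G.dist u v = k) (hup : G.upperNeighbors u v = {w, w'})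
    (hne : w ≠ w') : 3 ≤ doubleCharge (G.ascents u k) Prod.fst (fun t => t.2.2) v := by
  have hvw : w ∈ G.upperNeighbors u v := by simp [hup]
  have hvw' : w' ∈ G.upperNeighbors u v := by simp [hup]
  by_cases hw : 1 < #(G.upperNeighbors u w)
  · exact three_le_doubleCharge_of_one_lt_card hno hdeg hv hvk hvw hvw' hne hw
  by_cases hw' : 1 < #(G.upperNeighbors u w')
  · exact three_le_doubleCharge_of_one_lt_card hno hdeg hv hvk hvw' hvw hne.symm hw'
  have hadj := adj_of_upperNeighbors_eq_pair hno hdeg hv hvk hup hne (by omega) (by omega)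
  have hwk := dist_eq_of_mem_upperNeighbors hvw
  have hw'k := dist_eq_of_mem_upperNeighbors hvw'
  have hrw : G.Reachable u w := hv.trans (mem_upperNeighbors.mp hvw).1.reachable
  have hlow : G.lowerNeighbors u w = {v, w'} := by
    refine (eq_of_subset_of_card_le (fun x hx => ?_) ?_).symm
    · rcases mem_insert.mp hx with rfl | hx
      · exact mem_lowerNeighbors.mpr ⟨(mem_upperNeighbors.mp hvw).1.symm, by omega⟩
      · exact mem_singleton.mp hx ▸ mem_lowerNeighbors.mpr ⟨hadj, by omega⟩
    · rw [card_pair (by rintro rfl; omega)]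
      exact card_lowerNeighbors_le_two hno hrw (by omega)
  obtain ⟨q, hq⟩ := upperNeighbors_nonempty hno hrw (by omega) (hdeg w)
  obtain ⟨q', hq'⟩ := exists_mem_ascents hno (hdeg w') hv hvk hvw'
  have hqk := dist_eq_of_mem_upperNeighbors hq
  refine three_le_doubleCharge_of_two (mem_ascents_of_mem_upperNeighbors hv hvk hvw hq) hq' rfl
    rfl (by simp [hne]) (card_filter_ascents_eq_one
      (mem_ascents_of_mem_upperNeighbors hv hvk hvw hq) (fun x hx hxk => ?_) (fun x hx hxk => ?_))
  · exact eq_of_two_lower_of_adj hno hrw (mem_upperNeighbors.mp hvw).1.symm hadj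
      (by rintro rfl; omega) (by omega) (by omega) (mem_upperNeighbors.mp hq).1 hqk hx (by omega)
      (by omega)
  · have : x ∈ G.lowerNeighbors u w := mem_lowerNeighbors.mpr ⟨hx, by omega⟩
    rw [hlow, mem_insert, mem_singleton] at this
    rcases this with rfl | rfl
    · rfl
    · omega

lemma lowerNeighbors_eq_singleton_of_upperNeighbors_eq_singleton
    (hno : ¬ ∃ D : G.Diamond, D.size ≤ 3 * k + 8) (hdeg : 3 ≤ G.degree v) (hv : G.Reachable u v)
    (hvk : G.dist u v = k) (hup : G.upperNeighbors u v = {w}) :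
    G.lowerNeighbors u w = {v} := by
  have hvw : w ∈ G.upperNeighbors u v := by simp [hup]
  have hwk := dist_eq_of_mem_upperNeighbors hvw
  refine eq_singleton_iff_unique_mem.mpr
    ⟨mem_lowerNeighbors.mpr ⟨(mem_upperNeighbors.mp hvw).1.symm, by omega⟩, fun z hz => ?_⟩
  by_contra hzv
  refine not_reachableAvoiding_of_upperNeighbors_eq_singleton hno hdeg hv hvk hup
    ((reachableAvoiding_of_mem_lowerNeighbors hv hvw hz hzv ?_).mono (by omega))
  rw [hup, mem_singleton]
  rintro rfl
  exact G.irrefl (mem_lowerNeighbors.mp hz).1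

lemma eq_of_adj_of_upperNeighbors_eq_singleton (hno : ¬ ∃ D : G.Diamond, D.size ≤ 3 * k + 8)
    (hdeg : 3 ≤ G.degree v) (hv : G.Reachable u v) (hvk : G.dist u v = k)
    (hup : G.upperNeighbors u v = {w}) {q : V} (hq : q ∈ G.upperNeighbors u w)
    (hqw' : G.Adj q w') (hw'k : G.dist u w' = k + 1) : w' = w := by
  by_contra hne
  have hvw : w ∈ G.upperNeighbors u v := by simp [hup]
  have hwk := dist_eq_of_mem_upperNeighbors hvw
  have hqk := dist_eq_of_mem_upperNeighbors hq
  rw [mem_upperNeighbors] at hvw hq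
  have hw'_esc := reachableAvoiding_dist (u := u) (x := v)
    (((hv.trans hvw.1.reachable).trans hq.1.reachable).trans hqw'.reachable)
    (by rintro rfl; omega) (by omega) fun _ hadj => hne <| by
      simpa [hup] using (mem_upperNeighbors.mpr ⟨hadj, by omega⟩ : w' ∈ G.upperNeighbors u v)
  exact not_reachableAvoiding_of_upperNeighbors_eq_singleton hno hdeg hv hvk hup
    (((hw'_esc.cons hqw' (by rintro rfl; omega)).cons hq.1 hvw.1.ne').mono (by omega))

lemma three_le_doubleCharge_of_upperNeighbors_eq_singleton
    (hno : ¬ ∃ D : G.Diamond, D.size ≤ 3 * k + 8) (hdeg : ∀ x, 3 ≤ G.degree x)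
    (hv : G.Reachable u v) (hvk : G.dist u v = k) (hup : G.upperNeighbors u v = {w}) :
    3 ≤ doubleCharge (G.ascents u k) Prod.fst (fun t => t.2.2) v := by
  have hvw : w ∈ G.upperNeighbors u v := by simp [hup]
  have hwk := dist_eq_of_mem_upperNeighbors hvw
  have hlow := lowerNeighbors_eq_singleton_of_upperNeighbors_eq_singleton hno (hdeg v) hv hvk hup
  obtain ⟨q, hq, q', hq', hqq'⟩ := one_lt_card.mp <| show 1 < #(G.upperNeighbors u w) by
    have := card_lowerNeighbors_add_card_upperNeighbors (G := G) u w
    rw [hlow, card_singleton] at this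
    have := hdeg w
    omega
  refine three_le_doubleCharge_of_two (mem_ascents_of_mem_upperNeighbors hv hvk hvw hq)
    (mem_ascents_of_mem_upperNeighbors hv hvk hvw hq') rfl rfl (by simp [hqq'])
    (card_filter_ascents_eq_one (mem_ascents_of_mem_upperNeighbors hv hvk hvw hq)
      (fun x hx hxk => eq_of_adj_of_upperNeighbors_eq_singleton hno (hdeg v) hv hvk hup hq hx hxk)
      (fun x hx hxk => ?_))
  simpa [hlow] using mem_lowerNeighbors.mpr ⟨hx, (by omega : G.dist u x ≤ G.dist u w)⟩

lemma three_le_doubleCharge_ascents (hno : ¬ ∃ D : G.Diamond, D.size ≤ 3 * k + 8)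
    (hdeg : ∀ x, 3 ≤ G.degree x) (hv : G.Reachable u v) (hvk : G.dist u v = k) :
    3 ≤ doubleCharge (G.ascents u k) Prod.fst (fun t => t.2.2) v := by
  have hpos := card_pos.mpr (upperNeighbors_nonempty hno hv (by omega) (hdeg v))
  rcases lt_or_ge 2 #(G.upperNeighbors u v) with h | h
  · obtain ⟨w₁, h₁, w₂, h₂, w₃, h₃, h₁₂, h₁₃, h₂₃⟩ := two_lt_card.mp h
    exact three_le_doubleCharge_of_three_upper hno hdeg hv hvk h₁ h₂ h₃ h₁₂ h₁₃ h₂₃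
  rcases (by omega : #(G.upperNeighbors u v) = 1 ∨ #(G.upperNeighbors u v) = 2) with h | h
  · obtain ⟨w, hup⟩ := card_eq_one.mp h
    exact three_le_doubleCharge_of_upperNeighbors_eq_singleton hno hdeg hv hvk hup
  · obtain ⟨w, w', hne, hup⟩ := card_eq_two.mp h
    exact three_le_doubleCharge_of_upperNeighbors_eq_pair hno hdeg hv hvk hup hne

theorem three_mul_ncard_sphere_le (hno : ¬ ∃ D : G.Diamond, D.size ≤ 3 * k + 8)
    (hdeg : ∀ x, 3 ≤ G.degree x) :
    3 * (G.sphere u k).ncard ≤ 2 * (G.sphere u (k + 2)).ncard := by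
  classical
  rw [Set.ncard_eq_toFinset_card', Set.ncard_eq_toFinset_card']
  refine three_mul_card_le_two_mul_card_of_doubleCharge (T := G.ascents u k) (f := Prod.fst)
    (g := fun t => t.2.2) ?_ (fun q _ => card_filter_ascents_le_two hno q) fun v hv => ?_
  · rintro ⟨v, w, q⟩ ht
    rw [mem_ascents] at ht
    exact Set.mem_toFinset.mpr
      ⟨(ht.1.trans ht.2.2.1.reachable).trans ht.2.2.2.2.1.reachable, ht.2.2.2.2.2⟩
  · obtain ⟨hv, hvk⟩ := Set.mem_toFinset.mp hv
    exact three_le_doubleCharge_ascents hno hdeg hv hvk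

end Charge

end SimpleGraph

/-- Claim 2: if `G` has minimum degree at least 3 and no diamond with at most `3d + 2` edges
(`d ≥ 2`), then the BFS layers from any vertex `u` satisfy `|N_d| ≥ (3/2)·|N_{d-2}|`. -/
theorem sphere_growth_of_no_small_diamond (V : Type*) [Fintype V] [DecidableEq V]
    (G : SimpleGraph V) [DecidableRel G.Adj] (u : V) (d : ℕ) (hd : 2 ≤ d)
    (hdeg : ∀ v : V, 3 ≤ G.degree v)
    (hno : ¬ ∃ D : G.Diamond, D.size ≤ 3 * d + 2) :
    (3 / 2 : ℝ) * (G.sphere u (d - 2)).ncard ≤ (G.sphere u d).ncard := by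
  obtain ⟨k, rfl⟩ : ∃ k, d = k + 2 := ⟨d - 2, by omega⟩
  have hno' : ¬ ∃ D : G.Diamond, D.size ≤ 3 * k + 8 := fun ⟨D, hD⟩ => hno ⟨D, by omega⟩
  have h := G.three_mul_ncard_sphere_le (u := u) hno' hdeg
  rw [Nat.add_sub_cancel]
  have h' : (3 : ℝ) * (G.sphere u k).ncard ≤ 2 * (G.sphere u (k + 2)).ncard := by exact_mod_cast h
  linarith
end

section
/- Let G be a finite 2-connected simple graph, i.e., G has at least 3 vertices, is connected, and has no cutvertex. Suppose a set M_V of vertices of G and a set M_E of edges of G are chosen ("marked") such that no vertex in M_V is an endpoint of an edge in M_E. Then |M_V| + |M_E| is at most the total number of edges of G. -/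
/-! 2-connectedness forces minimum degree at least 2: a vertex `v` keeps a neighbour after any
other vertex is deleted, since it is still joined to some third vertex. Counting incidences
between the marked vertices and the edges meeting them (at least 2 per vertex, at most 2 per
edge) shows that there are at least as many such edges as marked vertices; the marked edges
lie among the remaining edges. -/

open SimpleGraph

variable {V : Type*}

namespace SimpleGraph

variable {G : SimpleGraph V}

theorem exists_adj_ne_of_induce_connected {x v u : V}
    (hx : (G.induce {w | w ≠ x}).Connected) (hv : v ≠ x) (hu : u ≠ x) (huv : u ≠ v) :
    ∃ w, G.Adj v w ∧ w ≠ x := by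
  obtain ⟨p⟩ := hx.preconnected ⟨v, hv⟩ ⟨u, hu⟩
  have hp : ¬ p.Nil := Walk.not_nil_of_ne fun h => huv (congrArg Subtype.val h).symm
  exact ⟨p.snd, p.adj_snd hp, p.snd.2⟩

variable [Fintype V] [DecidableEq V] [DecidableRel G.Adj]

theorem two_le_degree_of_induce_connected (hcard : 3 ≤ Fintype.card V)
    (hcut : ∀ x : V, (G.induce {w | w ≠ x}).Connected) (v : V) : 2 ≤ G.degree v := by
  have third : ∀ x, ∃ u, u ≠ x ∧ u ≠ v := fun x => by
    obtain ⟨u, -, hu⟩ := Finset.exists_mem_notMem_of_card_lt_card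
      (s := {x, v}) (t := Finset.univ) (Finset.card_le_two.trans_lt (by simp; omega))
    simp only [Finset.mem_insert, Finset.mem_singleton, not_or] at hu
    exact ⟨u, hu⟩
  obtain ⟨x, hx⟩ := Fintype.exists_ne_of_one_lt_card (by omega) v
  obtain ⟨u, hux, huv⟩ := third x
  obtain ⟨a, hva, -⟩ := exists_adj_ne_of_induce_connected (hcut x) hx.symm hux huv
  obtain ⟨u', hu'a, hu'v⟩ := third a
  obtain ⟨b, hvb, hba⟩ := exists_adj_ne_of_induce_connected (hcut a) hva.ne hu'a hu'v
  rw [← card_neighborFinset_eq_degree]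
  exact Finset.one_lt_card.2 ⟨a, by simpa using hva, b, by simpa using hvb, hba.symm⟩

theorem card_le_card_edgeFinset_filter_of_two_le_degree (s : Finset V)
    (hs : ∀ v ∈ s, 2 ≤ G.degree v) :
    s.card ≤ (G.edgeFinset.filter fun e => ∃ v ∈ s, v ∈ e).card := by
  set t := G.edgeFinset.filter fun e => ∃ v ∈ s, v ∈ e
  have hmul : s.card * 2 ≤ t.card * 2 := by
    refine Finset.card_mul_le_card_mul (fun v e => v ∈ e) (fun v hv => ?_) (fun e _ => ?_)
    · refine (hs v hv).trans ?_
      rw [← card_incidenceFinset_eq_degree]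
      refine Finset.card_le_card fun e he => ?_
      obtain ⟨he, hve⟩ := (mem_incidenceFinset _ _ _).1 he
      exact (Finset.mem_bipartiteAbove _).2
        ⟨Finset.mem_filter.2 ⟨mem_edgeFinset.2 he, v, hv, hve⟩, hve⟩
    · induction e with
      | h a b =>
        refine (Finset.card_le_card fun x hx => ?_).trans (Finset.card_le_two (a := a) (b := b))
        simpa using ((Finset.mem_bipartiteBelow _).1 hx).2
  omega

theorem card_add_card_le_card_edgeFinset_of_two_le_degree (MV : Finset V) (ME : Finset (Sym2 V))
    (hdeg : ∀ v ∈ MV, 2 ≤ G.degree v) (hME : ∀ e ∈ ME, e ∈ G.edgeSet)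
    (hdisj : ∀ v ∈ MV, ∀ e ∈ ME, v ∉ e) :
    MV.card + ME.card ≤ G.edgeFinset.card := by
  set t := G.edgeFinset.filter fun e => ∃ v ∈ MV, v ∈ e
  have hME_sub : ME ⊆ G.edgeFinset \ t := fun e he =>
    Finset.mem_sdiff.2 ⟨mem_edgeFinset.2 (hME e he), fun het =>
      let ⟨v, hv, hve⟩ := (Finset.mem_filter.1 het).2
      hdisj v hv e he hve⟩
  calc MV.card + ME.card ≤ t.card + (G.edgeFinset \ t).card :=
        add_le_add (card_le_card_edgeFinset_filter_of_two_le_degree MV hdeg)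
          (Finset.card_le_card hME_sub)
    _ = G.edgeFinset.card := by
        rw [add_comm]; exact Finset.card_sdiff_add_card_eq_card (Finset.filter_subset _ _)

end SimpleGraph

theorem marked_vertices_edges_le_edges_general (V : Type*) [Fintype V] [DecidableEq V]
    (G : SimpleGraph V) [DecidableRel G.Adj]
    (hcard : 3 ≤ Fintype.card V)
    (hcut : ∀ v : V, (G.induce {w | w ≠ v}).Connected)
    (MV : Finset V) (ME : Finset (Sym2 V)) (hME : ∀ e ∈ ME, e ∈ G.edgeSet)
    (hdisj : ∀ v ∈ MV, ∀ e ∈ ME, v ∉ e) :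
    MV.card + ME.card ≤ G.edgeFinset.card :=
  G.card_add_card_le_card_edgeFinset_of_two_le_degree MV ME
    (fun v _ => G.two_le_degree_of_induce_connected hcard hcut v) hME hdisj

/-- In a finite 2-connected simple graph, if marked vertices and marked edges are such that
no marked vertex is an endpoint of a marked edge, then the total number of marked vertices
and marked edges is at most the number of edges of the graph. -/
theorem marked_vertices_edges_le_edges (V : Type*) [Fintype V] [DecidableEq V]
    (G : SimpleGraph V) [DecidableRel G.Adj]
    (hcard : 3 ≤ Fintype.card V) (hconn : G.Connected)
    (hcut : ∀ v : V, (G.induce {w | w ≠ v}).Connected)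
    (MV : Finset V) (ME : Finset (Sym2 V)) (hME : ∀ e ∈ ME, e ∈ G.edgeSet)
    (hdisj : ∀ v ∈ MV, ∀ e ∈ ME, v ∉ e) :
    MV.card + ME.card ≤ G.edgeFinset.card :=
  marked_vertices_edges_le_edges_general V G hcard hcut MV ME hME hdisj
end

section
/- Let q ≥ 2 be an integer and let F be a finite simple forest of cacti with exactly k connected components. For each integer i, let γ_i(F) denote the number of cycles of length i in F (counted as subgraphs). Then the number of edges of F satisfies ||F|| ≤ ((q+1)/q)·(|F| − k) + Σ_{i=3}^{q} ((q−i+1)/q)·γ_i(F), where |F| denotes the number of vertices of F. -/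
open SimpleGraph

variable {V : Type*}

/-!
If two distinct cycles of a graph share an edge, an edge `f` of the second cycle that is not on
the first lies on a subpath of the second cycle meeting the first one exactly in two distinct
vertices `x`, `y`; this subpath and the two `x`-`y` arcs of the first cycle form a diamond.
So the cycles of a forest of cacti are pairwise edge-disjoint, and `∑ i, i * γ_i ≤ ‖F‖`.
Every finite graph satisfies `‖F‖ + k ≤ |F| + γ` with `γ = ∑ i, γ_i`: deleting an edge either
destroys a cycle or, if the edge is a bridge, creates a component. Adding `q + 1` times the
second inequality to the first gives the bound, after dropping the terms with `i > q`, whose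
weight `q + 1 - i` is not positive.
-/

namespace SimpleGraph.Walk

variable {G : SimpleGraph V}

def InternallyDisjoint {x y : V} (p : G.Walk x y) (S : Set V) : Prop :=
  ∀ z ∈ p.support, z ∈ S → z = x ∨ z = y

lemma IsPath.eq_cons_of_mem_edges {x y z : V} {p : G.Walk x y} (hp : p.IsPath)
    (he : s(x, z) ∈ p.edges) : ∃ (h : G.Adj x z) (q : G.Walk z y), p = cons h q := by
  cases p with
  | nil => simp at he
  | cons h q =>
    rw [edges_cons, List.mem_cons, Sym2.eq_iff] at he
    rcases he with (⟨-, rfl⟩ | ⟨rfl, rfl⟩) | he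
    · exact ⟨h, q, rfl⟩
    · exact absurd h G.irrefl
    · exact absurd (q.fst_mem_support_of_mem_edges he) ((cons_isPath_iff h q).mp hp).2

lemma IsCycle.exists_cons_eq_or_eq_reverse {a b : V} {c : G.Walk a a} (hc : c.IsCycle)
    (he : s(a, b) ∈ c.edges) :
    ∃ (h : G.Adj a b) (t : G.Walk b a), cons h t = c ∨ cons h t = c.reverse := by
  cases c with
  | nil => simp at he
  | cons h t =>
    rw [edges_cons, List.mem_cons, Sym2.eq_iff] at he
    rcases he with (⟨-, rfl⟩ | ⟨rfl, rfl⟩) | he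
    · exact ⟨h, t, .inl rfl⟩
    · exact absurd h G.irrefl
    · have ht : t.reverse.IsPath := ((cons_isCycle_iff t h).mp hc).1.reverse
      obtain ⟨h', r, hr⟩ := ht.eq_cons_of_mem_edges (by simpa using he)
      exact ⟨h', r.append (cons h.symm nil), .inr (by rw [reverse_cons, hr, cons_append])⟩

lemma exists_append_eq_of_exists_mem_support {x y : V} (p : G.Walk x y) (S : Set V)
    (hS : ∃ z ∈ p.support, z ∈ S) :
    ∃ c ∈ S, ∃ (q : G.Walk x c) (r : G.Walk c y),
      q.append r = p ∧ ∀ z ∈ q.support, z ∈ S → z = c := by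
  induction p with
  | nil =>
    obtain ⟨z, hz, hzS⟩ := hS
    rw [support_nil, List.mem_singleton] at hz
    subst hz
    exact ⟨z, hzS, nil, nil, rfl, by simp⟩
  | @cons x w y h p ih =>
    by_cases hx : x ∈ S
    · exact ⟨x, hx, nil, cons h p, rfl, by simp⟩
    obtain ⟨c, hc, q, r, rfl, hq⟩ := ih (by simpa [hx] using hS)
    refine ⟨c, hc, cons h q, r, rfl, fun z hz hzS => ?_⟩
    rw [support_cons, List.mem_cons] at hz
    exact hz.elim (fun h => absurd (h ▸ hzS) hx) (hq z · hzS)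

lemma IsPath.eq_of_mem_support_append {x y c z : V} {q : G.Walk x c} {r : G.Walk c y}
    (h : (q.append r).IsPath) (hq : z ∈ q.support) (hr : z ∈ r.support) : z = c :=
  by_contra fun hzc => h.ne_of_mem_support_of_append hzc hq hr rfl

lemma exists_isPath_internallyDisjoint_of_adj {a b u v : V} (hab : G.Adj a b) {t : G.Walk b a}
    (ht : t.IsPath) {S : Set V} (huv : u ≠ v) (hu : u ∈ t.support) (hv : v ∈ t.support)
    (huS : u ∈ S) (hvS : v ∈ S) :
    ∃ (x y : V) (R : G.Walk x y), R.IsPath ∧ x ≠ y ∧ x ∈ S ∧ y ∈ S ∧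
      R.InternallyDisjoint S ∧ s(a, b) ∈ R.edges := by
  obtain ⟨y₁, hy₁S, q₁, r, rfl, hq₁⟩ := t.exists_append_eq_of_exists_mem_support S ⟨u, hu, huS⟩
  have hr : r.IsPath := ht.of_append_right
  have hz : ∃ z ∈ r.support, z ∈ S ∧ z ≠ y₁ := by
    have key : ∀ z ∈ (q₁.append r).support, z ∈ S → z ≠ y₁ → z ∈ r.support := fun z hz hzS hzy =>
      ((mem_support_append_iff q₁ r).mp hz).resolve_left fun h => hzy (hq₁ z h hzS)
    rcases eq_or_ne u y₁ with rfl | huy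
    · exact ⟨v, key v hv hvS huv.symm, hvS, huv.symm⟩
    · exact ⟨u, key u hu huS huy, huS, huy⟩
  obtain ⟨z, hzr, hzS, hzy⟩ := hz
  obtain ⟨y₂, hy₂S, q₂, r₂, hqr₂, hq₂⟩ :=
    r.reverse.exists_append_eq_of_exists_mem_support S ⟨z, by simpa using hzr, hzS⟩
  have hq₂r : ∀ w ∈ q₂.support, w ∈ r.support := fun w hw => by
    have hw' : w ∈ r.reverse.support := hqr₂ ▸ q₂.support_subset_support_append_left r₂ hw
    simpa using hw'
  have hy₂y₁ : y₂ ≠ y₁ := by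
    rintro rfl
    obtain rfl : r₂ = nil := (isPath_iff_nil.mp (hqr₂ ▸ hr.reverse).of_append_right).eq_nil
    rw [append_nil] at hqr₂
    exact hzy (hq₂ z (by simpa [hqr₂] using hzr) hzS)
  -- `y₁` and `y₂` are the first and the last vertex of `S` on `t`; the path is `y₂ ⤳ a - b ⤳ y₁`.
  refine ⟨y₂, y₁, q₂.reverse.append (cons hab q₁), ?_, hy₂y₁, hy₂S, hy₁S, ?_, by simp⟩
  · refine IsPath.mk' ?_
    rw [support_append, support_cons, List.tail_cons, List.nodup_append']
    refine ⟨(hqr₂ ▸ hr.reverse).of_append_left.reverse.support_nodup,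
      ht.of_append_left.support_nodup, fun w hw₂ hw₁ => hy₂y₁ ?_⟩
    rw [support_reverse, List.mem_reverse] at hw₂
    have hwy : w = y₁ := ht.eq_of_mem_support_append hw₁ (hq₂r w hw₂)
    exact (hq₂ y₁ (hwy ▸ hw₂) hy₁S).symm
  · intro w hw hwS
    rw [mem_support_append_iff, support_reverse, List.mem_reverse, support_cons,
      List.mem_cons] at hw
    rcases hw with hw | rfl | hw
    · exact .inl (hq₂ w hw hwS)
    · exact .inl (hq₂ _ q₂.start_mem_support hwS)
    · exact .inr (hq₁ w hw hwS)

lemma IsCycle.exists_isPath_pair {x y : V} {c : G.Walk x x} (hc : c.IsCycle)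
    (hy : y ∈ c.support) (hxy : x ≠ y) :
    ∃ A B : G.Walk x y, A.IsPath ∧ B.IsPath ∧ A ≠ B ∧ A.InternallyDisjoint {z | z ∈ B.support} ∧
      A.support ⊆ c.support ∧ B.support ⊆ c.support ∧ A.edges ⊆ c.edges ∧ B.edges ⊆ c.edges := by
  classical
  set A := c.takeUntil y hy
  set D := c.dropUntil y hy
  have hAnil : ¬A.Nil := not_nil_of_ne hxy
  have hD : D.IsPath := ((take_spec c hy).symm ▸ hc).isPath_of_append_right hAnil
  refine ⟨A, D.reverse, hc.isPath_takeUntil hy, hD.reverse, ?_, ?_,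
    support_takeUntil_subset_support c hy, by simpa using support_dropUntil_subset_support c hy,
    edges_takeUntil_subset_edges c hy, by simpa using edges_dropUntil_subset_edges c hy⟩
  · intro hAD
    obtain ⟨e, he⟩ := List.exists_mem_of_ne_nil _ (edges_eq_nil.not.mpr hAnil)
    refine hc.isTrail.disjoint_edges_takeUntil_dropUntil hy he ?_
    simpa [hAD] using he
  · intro z hzA hzD
    replace hzD : z ∈ D.support := by simpa using hzD
    by_contra! hz
    have hnodup : (A.support.tail ++ D.support.tail).Nodup := by
      rw [← tail_support_append, take_spec]
      exact hc.support_nodup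
    exact List.disjoint_of_nodup_append hnodup
      (((mem_support_iff A).mp hzA).resolve_left hz.1)
      (((mem_support_iff D).mp hzD).resolve_left hz.2)

lemma IsTrail.ncard_edgeSet {u v : V} {w : G.Walk u v} (hw : w.IsTrail) :
    w.edgeSet.ncard = w.length := by
  classical
  rw [← w.coe_edges_toFinset, Set.ncard_coe_finset, List.toFinset_card_of_nodup hw.edges_nodup,
    w.length_edges]

end SimpleGraph.Walk

namespace SimpleGraph

open Walk

variable {G : SimpleGraph V}

lemma nonempty_diamond_of_isCycle_of_isPath {a x y : V} {c : G.Walk a a} (hc : c.IsCycle)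
    {R : G.Walk x y} (hR : R.IsPath) (hxy : x ≠ y) (hx : x ∈ c.support) (hy : y ∈ c.support)
    (hRc : R.InternallyDisjoint {z | z ∈ c.support}) {f : Sym2 V} (hfR : f ∈ R.edges)
    (hfc : f ∉ c.edges) : Nonempty G.Diamond := by
  classical
  have hy' : y ∈ (c.rotate x hx).support := (mem_support_rotate_iff c x hx).mpr hy
  obtain ⟨A, B, hA, hB, hAB, hdisj, hAc, hBc, hAe, hBe⟩ :=
    (hc.rotate hx).exists_isPath_pair hy' hxy
  have hedges {P : G.Walk x y} (hP : P.edges ⊆ (c.rotate x hx).edges) : P ≠ R := by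
    rintro rfl
    exact hfc ((rotate_edges c x hx).perm.subset (hP hfR))
  have hsupport {P : G.Walk x y} (hP : P.support ⊆ (c.rotate x hx).support) :
      ∀ z ∈ P.support, z ∈ R.support → z = x ∨ z = y := fun z hzP hzR =>
    hRc z hzR ((mem_support_rotate_iff c x hx).mp (hP hzP))
  exact ⟨⟨x, y, hxy, A, B, R, hA, hB, hR, hAB, hedges hAe, hedges hBe, hdisj, hsupport hAc,
    hsupport hBc⟩⟩

lemma nonempty_diamond_of_isCycle_of_isCycle {a₁ a₂ : V} {w₁ : G.Walk a₁ a₁}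
    {w₂ : G.Walk a₂ a₂} (h₁ : w₁.IsCycle) (h₂ : w₂.IsCycle) {e f : Sym2 V}
    (he₁ : e ∈ w₁.edges) (he₂ : e ∈ w₂.edges) (hf₂ : f ∈ w₂.edges) (hf₁ : f ∉ w₁.edges) :
    Nonempty G.Diamond := by
  classical
  induction f using Sym2.ind with | _ a b => ?_
  have ha : a ∈ w₂.support := w₂.fst_mem_support_of_mem_edges hf₂
  have hedges : ∀ g, g ∈ (w₂.rotate a ha).edges ↔ g ∈ w₂.edges :=
    fun g => (rotate_edges w₂ a ha).perm.mem_iff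
  obtain ⟨hab, t, hcons⟩ :=
    (h₂.rotate ha).exists_cons_eq_or_eq_reverse ((hedges _).mpr hf₂)
  have hcyc : (cons hab t).IsCycle ∧ e ∈ (cons hab t).edges := by
    rcases hcons with h | h <;> rw [h] <;> simp [h₂.rotate ha, hedges, he₂]
  have ht : t.IsPath := ((cons_isCycle_iff t hab).mp hcyc.1).1
  have het : e ∈ t.edges := by
    have := hcyc.2
    rw [edges_cons, List.mem_cons] at this
    exact this.resolve_left fun h => hf₁ (h ▸ he₁)
  induction e using Sym2.ind with | _ u v => ?_
  obtain ⟨x, y, R, hR, hxy, hx, hy, hRw, hfR⟩ :=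
    exists_isPath_internallyDisjoint_of_adj hab ht (S := {z | z ∈ w₁.support})
      (w₁.adj_of_mem_edges he₁).ne (t.fst_mem_support_of_mem_edges het)
      (t.snd_mem_support_of_mem_edges het) (w₁.fst_mem_support_of_mem_edges he₁)
      (w₁.snd_mem_support_of_mem_edges he₁)
  exact nonempty_diamond_of_isCycle_of_isPath h₁ hR hxy hx hy hRw hfR hf₁

lemma cycleSet_pairwiseDisjoint (hG : IsEmpty G.Diamond) : G.cycleSet.PairwiseDisjoint id := by
  rintro _ ⟨a₁, w₁, h₁, rfl⟩ _ ⟨a₂, w₂, h₂, rfl⟩ hne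
  refine Set.disjoint_left.mpr fun e he₁ he₂ => not_isEmpty_iff.mpr ?_ hG
  by_cases h₂₁ : ∃ f ∈ w₂.edges, f ∉ w₁.edges
  · obtain ⟨f, hf₂, hf₁⟩ := h₂₁
    exact nonempty_diamond_of_isCycle_of_isCycle h₁ h₂ he₁ he₂ hf₂ hf₁
  · obtain ⟨f, hf₁, hf₂⟩ : ∃ f ∈ w₁.edges, f ∉ w₂.edges := by
      by_contra! h₁₂
      push Not at h₂₁
      exact hne (Set.ext fun f => ⟨h₁₂ f, h₂₁ f⟩)
    exact nonempty_diamond_of_isCycle_of_isCycle h₂ h₁ he₂ he₁ hf₁ hf₂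

lemma cycleSet_mono {H : SimpleGraph V} (h : G ≤ H) : G.cycleSet ⊆ H.cycleSet := by
  rintro _ ⟨a, w, hw, rfl⟩
  exact ⟨a, w.mapLe h, hw.mapLe h, by rw [edges_mapLe_eq_edges]⟩

lemma cycleSet_deleteEdges_ssubset {a : V} {w : G.Walk a a} (hw : w.IsCycle) {e : Sym2 V}
    (he : e ∈ w.edges) : (G.deleteEdges {e}).cycleSet ⊂ G.cycleSet := by
  refine (Set.ssubset_iff_of_subset (cycleSet_mono (G.deleteEdges_le _))).mpr
    ⟨_, ⟨a, w, hw, rfl⟩, ?_⟩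
  rintro ⟨b, w', -, hww'⟩
  have hew' : e ∈ {g | g ∈ w'.edges} := hww' ▸ he
  simpa using w'.edges_subset_edgeSet hew'

lemma cycleSetLen_eq_sep (i : ℕ) : G.cycleSetLen i = {s ∈ G.cycleSet | s.ncard = i} := by
  ext s
  constructor
  · rintro ⟨v, w, hw, rfl, rfl⟩
    exact ⟨⟨v, w, hw, rfl⟩, hw.isTrail.ncard_edgeSet⟩
  · rintro ⟨⟨v, w, hw, rfl⟩, rfl⟩
    exact ⟨v, w, hw, hw.isTrail.ncard_edgeSet.symm, rfl⟩

variable [Finite V]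

lemma card_connectedComponent_le_card : Nat.card G.ConnectedComponent ≤ Nat.card V :=
  Nat.card_le_card_of_surjective _ fun c => c.ind fun v => ⟨v, rfl⟩

lemma card_connectedComponent_lt_deleteEdges {e : Sym2 V} (he : e ∈ G.edgeSet)
    (hb : G.IsBridge e) :
    Nat.card G.ConnectedComponent < Nat.card (G.deleteEdges {e}).ConnectedComponent := by
  induction e using Sym2.ind with | _ u v => ?_
  have hφ := ConnectedComponent.surjective_map_ofLE (G.deleteEdges_le {s(u, v)})
  refine lt_of_not_ge fun hle => hb ?_
  refine ConnectedComponent.exact ((hφ.bijective_of_nat_card_le hle).injective ?_)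
  simpa using (ConnectedComponent.eq.mpr (show G.Adj u v from he).reachable)

lemma card_connectedComponent_add_ncard_cycleSet_lt {e : Sym2 V} (he : e ∈ G.edgeSet) :
    Nat.card G.ConnectedComponent + (G.deleteEdges {e}).cycleSet.ncard <
      Nat.card (G.deleteEdges {e}).ConnectedComponent + G.cycleSet.ncard := by
  by_cases hb : G.IsBridge e
  · exact Nat.add_lt_add_of_lt_of_le (card_connectedComponent_lt_deleteEdges he hb)
      (Set.ncard_le_ncard (cycleSet_mono (G.deleteEdges_le _)))
  · obtain ⟨a, w, hw, hew⟩ : ∃ (a : V) (w : G.Walk a a), w.IsCycle ∧ e ∈ w.edges := by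
      simpa [isBridge_iff_forall_cycle_notMem he] using hb
    exact Nat.add_lt_add_of_le_of_lt
      (ConnectedComponent.card_le_card_of_le (G.deleteEdges_le _))
      (Set.ncard_lt_ncard (cycleSet_deleteEdges_ssubset hw hew))

variable (G) in
lemma ncard_edgeSet_add_card_connectedComponent_le :
    G.edgeSet.ncard + Nat.card G.ConnectedComponent ≤ Nat.card V + G.cycleSet.ncard := by
  induction hn : G.edgeSet.ncard generalizing G with
  | zero =>
    have := G.card_connectedComponent_le_card
    omega
  | succ n ih =>
    obtain ⟨e, he⟩ := Set.nonempty_of_ncard_ne_zero (s := G.edgeSet) (by omega)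
    have hn' : (G.deleteEdges {e}).edgeSet.ncard = n := by
      have := Set.ncard_sdiff_singleton_add_one he
      rw [edgeSet_deleteEdges]
      omega
    have := ih (G.deleteEdges {e}) hn'
    have := card_connectedComponent_add_ncard_cycleSet_lt he
    omega

lemma ncard_mem_Icc_of_mem_cycleSet {s : Set (Sym2 V)} (hs : s ∈ G.cycleSet) :
    s.ncard ∈ Finset.Icc 3 G.edgeSet.ncard := by
  obtain ⟨v, w, hw, rfl⟩ := hs
  refine Finset.mem_Icc.mpr ⟨hw.isTrail.ncard_edgeSet ▸ hw.three_le_length, ?_⟩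
  exact Set.ncard_le_ncard fun e he => w.edges_subset_edgeSet he

lemma sum_ncard_cycleSetLen_mul (φ : ℕ → ℕ) {M : ℕ} (hM : G.edgeSet.ncard ≤ M) :
    ∑ i ∈ Finset.Icc 3 M, (G.cycleSetLen i).ncard * φ i =
      ∑ s ∈ G.cycleSet.toFinite.toFinset, φ s.ncard := by
  classical
  rw [← Finset.sum_fiberwise_of_maps_to (g := Set.ncard) (t := Finset.Icc 3 M) fun s hs =>
    Finset.Icc_subset_Icc_right hM (ncard_mem_Icc_of_mem_cycleSet (by simpa using hs))]
  refine Finset.sum_congr rfl fun i _ => ?_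
  have hfiber : G.cycleSetLen i = ↑({s ∈ G.cycleSet.toFinite.toFinset | s.ncard = i}) := by
    ext s
    simp [cycleSetLen_eq_sep]
  rw [Finset.sum_congr rfl fun s hs => by rw [(Finset.mem_filter.mp hs).2], Finset.sum_const,
    smul_eq_mul, hfiber, Set.ncard_coe_finset]

lemma ncard_cycleSet_eq_sum {M : ℕ} (hM : G.edgeSet.ncard ≤ M) :
    G.cycleSet.ncard = ∑ i ∈ Finset.Icc 3 M, (G.cycleSetLen i).ncard := by
  simpa [Set.ncard_eq_toFinset_card _ G.cycleSet.toFinite] using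
    (sum_ncard_cycleSetLen_mul (fun _ => 1) hM).symm

lemma sum_mul_ncard_cycleSetLen_le (hG : IsEmpty G.Diamond) {M : ℕ} (hM : G.edgeSet.ncard ≤ M) :
    ∑ i ∈ Finset.Icc 3 M, i * (G.cycleSetLen i).ncard ≤ G.edgeSet.ncard := by
  simp_rw [mul_comm _ (Set.ncard _)]
  calc ∑ i ∈ Finset.Icc 3 M, (G.cycleSetLen i).ncard * id i
      = ∑ᶠ s ∈ G.cycleSet, s.ncard := by
        rw [sum_ncard_cycleSetLen_mul id hM, ← finsum_mem_coe_finset, Set.Finite.coe_toFinset]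
        rfl
    _ = (⋃ s ∈ G.cycleSet, id s).ncard :=
        ((Set.toFinite _).ncard_biUnion (fun _ _ => Set.toFinite _)
          (cycleSet_pairwiseDisjoint hG)).symm
    _ ≤ G.edgeSet.ncard := by
        refine Set.ncard_le_ncard (Set.iUnion₂_subset ?_)
        rintro _ ⟨v, w, -, rfl⟩ e he
        exact w.edges_subset_edgeSet he

end SimpleGraph

lemma cacti_edge_bound_of_counts {m n k q M : ℕ} (γ : ℕ → ℕ) (hq : 0 < q) (hqM : q ≤ M)
    (hcyclomatic : m + k ≤ n + ∑ i ∈ Finset.Icc 3 M, γ i)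
    (hdisjoint : ∑ i ∈ Finset.Icc 3 M, i * γ i ≤ m) :
    (m : ℝ) ≤ ((q : ℝ) + 1) / q * ((n : ℝ) - k) +
      ∑ i ∈ Finset.Icc 3 q, ((q : ℝ) - i + 1) / q * γ i := by
  have htail : ∑ i ∈ Finset.Icc 3 M \ Finset.Icc 3 q, ((q : ℝ) - i + 1) * γ i ≤ 0 := by
    refine Finset.sum_nonpos fun i hi => mul_nonpos_of_nonpos_of_nonneg ?_ (Nat.cast_nonneg _)
    have : q + 1 ≤ i := by simp only [Finset.mem_sdiff, Finset.mem_Icc] at hi; omega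
    have : (q : ℝ) + 1 ≤ i := by exact_mod_cast this
    linarith
  have hsplit : ∑ i ∈ Finset.Icc 3 M, ((q : ℝ) - i + 1) * γ i =
      ((q : ℝ) + 1) * ∑ i ∈ Finset.Icc 3 M, (γ i : ℝ) - ∑ i ∈ Finset.Icc 3 M, (i : ℝ) * γ i := by
    rw [Finset.mul_sum, ← Finset.sum_sub_distrib]
    exact Finset.sum_congr rfl fun i _ => by ring
  rw [← Finset.sum_sdiff (Finset.Icc_subset_Icc_right hqM)] at hsplit
  have h₁ : (m : ℝ) + k ≤ n + ∑ i ∈ Finset.Icc 3 M, (γ i : ℝ) := by exact_mod_cast hcyclomatic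
  have h₂ : ∑ i ∈ Finset.Icc 3 M, (i : ℝ) * γ i ≤ m := by exact_mod_cast hdisjoint
  have hq' : (0 : ℝ) < q := by exact_mod_cast hq
  simp_rw [div_mul_eq_mul_div, ← Finset.sum_div, ← add_div, le_div_iff₀ hq']
  linarith [mul_le_mul_of_nonneg_left h₁ (by positivity : (0 : ℝ) ≤ q + 1)]

theorem forest_of_cacti_edge_bound_general (V : Type*) [Fintype V]
    (G : SimpleGraph V) [DecidableRel G.Adj] (q : ℕ) (hq : 2 ≤ q)
    (hdiamondfree : IsEmpty G.Diamond)
    (k : ℕ) (hk : Nat.card G.ConnectedComponent = k) :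
    (G.edgeFinset.card : ℝ) ≤
      ((q : ℝ) + 1) / q * ((Fintype.card V : ℝ) - k) +
        ∑ i ∈ Finset.Icc 3 q, ((q : ℝ) - i + 1) / q * (G.cycleSetLen i).ncard := by
  have hm : G.edgeSet.ncard = G.edgeFinset.card := by rw [← coe_edgeFinset, Set.ncard_coe_finset]
  have hM : G.edgeSet.ncard ≤ max G.edgeSet.ncard q := le_max_left _ _
  have hcyclomatic := G.ncard_edgeSet_add_card_connectedComponent_le
  rw [ncard_cycleSet_eq_sum hM, hk, Nat.card_eq_fintype_card] at hcyclomatic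
  rw [← hm]
  exact cacti_edge_bound_of_counts _ (by omega) (le_max_right _ _) hcyclomatic
    (sum_mul_ncard_cycleSetLen_le hdiamondfree hM)

/-- Bound on the number of edges of a forest of cacti (a finite simple graph with no diamond)
with `k` connected components:
`‖F‖ ≤ ((q+1)/q)·(|F| − k) + Σ_{i=3}^{q} ((q−i+1)/q)·γ_i(F)`. -/
theorem forest_of_cacti_edge_bound (V : Type*) [Fintype V] [DecidableEq V]
    (G : SimpleGraph V) [DecidableRel G.Adj] (q : ℕ) (hq : 2 ≤ q)
    (hdiamondfree : IsEmpty G.Diamond)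
    (k : ℕ) (hk : Nat.card G.ConnectedComponent = k) :
    (G.edgeFinset.card : ℝ) ≤
      ((q : ℝ) + 1) / q * ((Fintype.card V : ℝ) - k) +
        ∑ i ∈ Finset.Icc 3 q, ((q : ℝ) - i + 1) / q * (G.cycleSetLen i).ncard :=
  forest_of_cacti_edge_bound_general V G q hq hdiamondfree k hk
end

section
/- Let H be a finite simple graph, let S be a subgraph of H in which every vertex of S has at least two neighbors within S, and let P be a path in H each of whose internal vertices has exactly two neighbors in H. If S contains some internal vertex of P, then S contains every vertex of P. -/
/-!
An internal vertex `x` of `P` lying in `S` has at least two neighbours in `S` but only two in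
`H`, so all of its `H`-neighbours lie in `S`. Walking from an internal vertex of `P` in `S`
towards either end of `P`, this pushes membership in `S` along the path up to both endpoints.
-/

open SimpleGraph

namespace SimpleGraph

variable {V : Type*} {G : SimpleGraph V}

theorem Subgraph.mem_verts_of_ncard_neighborSet_le {S : G.Subgraph} {v w : V}
    (hfin : (G.neighborSet v).Finite)
    (hle : (G.neighborSet v).ncard ≤ (S.neighborSet v).ncard) (hadj : G.Adj v w) :
    w ∈ S.verts := by
  have hnbr : S.neighborSet v = G.neighborSet v :=
    Set.eq_of_subset_of_ncard_le (S.neighborSet_subset v) hle hfin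
  have hw : w ∈ S.neighborSet v := hnbr ▸ hadj
  exact S.edge_vert (S.adj_symm hw)

namespace Walk

variable {u v : V} {p : G.Walk u v}

theorem IsPath.start_notMem_support_dropUntil [DecidableEq V] (hp : p.IsPath) {x : V} (hx : x ∈ p.support)
    (hxu : x ≠ u) : u ∉ (p.dropUntil x hx).support := by
  intro hu
  have hnodup := hp.support_nodup
  rw [← p.take_spec hx, support_append] at hnodup
  have hu_tail : u ∈ (p.dropUntil x hx).support.tail := by
    rw [← cons_tail_support, List.mem_cons] at hu
    exact hu.resolve_left hxu.symm
  exact List.disjoint_of_nodup_append hnodup (start_mem_support _) hu_tail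

theorem IsPath.support_subset_of_forall_adj (hp : p.IsPath) {s : Set V}
    (hs : ∀ x ∈ p.support, x ≠ v → x ∈ s → ∀ y, G.Adj x y → y ∈ s) (hu : u ∈ s) :
    ∀ x ∈ p.support, x ∈ s := by
  induction p with
  | nil => simpa using hu
  | @cons u c v hadj p ih =>
    rw [cons_isPath_iff] at hp
    have huv : u ≠ v := by
      rintro rfl
      exact hp.2 p.end_mem_support
    have hc : c ∈ s := hs u (start_mem_support _) huv hu c hadj
    intro x hx
    rcases List.mem_cons.mp hx with rfl | hx
    · exact hu
    · exact ih hp.1 (fun y hy => hs y (List.mem_cons_of_mem _ hy)) hc x hx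

theorem IsPath.support_subset_of_internal_mem (hp : p.IsPath) {s : Set V}
    (hs : ∀ x ∈ p.support, x ≠ u → x ≠ v → x ∈ s → ∀ y, G.Adj x y → y ∈ s)
    {x : V} (hx : x ∈ p.support) (hxu : x ≠ u) (hxv : x ≠ v) (hxs : x ∈ s) :
    ∀ y ∈ p.support, y ∈ s := by
  classical
  set q := p.takeUntil x hx
  set r := p.dropUntil x hx
  have hv : v ∉ q.support := endpoint_notMem_support_takeUntil hp hx hxv.symm
  have hu : u ∉ r.support := hp.start_notMem_support_dropUntil hx hxu
  have hq : ∀ y ∈ q.reverse.support, y ∈ s := by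
    refine (hp.takeUntil hx).reverse.support_subset_of_forall_adj (fun y hy hyu => ?_) hxs
    rw [support_reverse, List.mem_reverse] at hy
    exact hs y (p.support_takeUntil_subset_support hx hy) hyu (ne_of_mem_of_not_mem hy hv)
  have hr : ∀ y ∈ r.support, y ∈ s := by
    refine (hp.dropUntil hx).support_subset_of_forall_adj (fun y hy hyv => ?_) hxs
    exact hs y (p.support_dropUntil_subset_support hx hy) (ne_of_mem_of_not_mem hy hu) hyv
  intro y hy
  rw [← p.take_spec hx, mem_support_append_iff] at hy
  rcases hy with hy | hy
  · exact hq y (by rwa [support_reverse, List.mem_reverse])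
  · exact hr y hy

end Walk

end SimpleGraph

theorem subgraph_contains_path_of_internal_vertex_general (V : Type*)
    (H : SimpleGraph V) (S : H.Subgraph)
    (hS : ∀ v ∈ S.verts, 2 ≤ (S.neighborSet v).ncard)
    (a b : V) (P : H.Walk a b) (hP : P.IsPath)
    (hint : ∀ x ∈ P.support, x ≠ a → x ≠ b → (H.neighborSet x).ncard = 2)
    (hmem : ∃ x ∈ P.support, x ≠ a ∧ x ≠ b ∧ x ∈ S.verts) :
    ∀ x ∈ P.support, x ∈ S.verts := by
  obtain ⟨x, hx, hxa, hxb, hxS⟩ := hmem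
  refine hP.support_subset_of_internal_mem (fun y hy hya hyb hyS z hyz => ?_) hx hxa hxb hxS
  have hdeg := hint y hy hya hyb
  exact S.mem_verts_of_ncard_neighborSet_le (Set.finite_of_ncard_ne_zero (by omega))
    (hdeg ▸ hS y hyS) hyz

/-- Let `S` be a subgraph of a finite simple graph `H` in which every vertex of `S` has at
least two neighbours within `S`, and let `P` be a path in `H` each of whose internal vertices
has exactly two neighbours in `H`. If `S` contains an internal vertex of `P`, then `S`
contains every vertex of `P`. -/
theorem subgraph_contains_path_of_internal_vertex (V : Type*) [Fintype V]
    (H : SimpleGraph V) (S : H.Subgraph)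
    (hS : ∀ v ∈ S.verts, 2 ≤ (S.neighborSet v).ncard)
    (a b : V) (P : H.Walk a b) (hP : P.IsPath)
    (hint : ∀ x ∈ P.support, x ≠ a → x ≠ b → (H.neighborSet x).ncard = 2)
    (hmem : ∃ x ∈ P.support, x ≠ a ∧ x ≠ b ∧ x ∈ S.verts) :
    ∀ x ∈ P.support, x ∈ S.verts :=
  subgraph_contains_path_of_internal_vertex_general V H S hS a b P hP hint hmem
end

section
/- Every finite 2-connected simple graph on at least 3 vertices that is not a cycle contains a diamond. -/
open SimpleGraph

variable {V : Type*}

/-- A simple graph is a cycle if it has a cycle passing through every vertex and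
using every edge. -/
def SimpleGraph.IsCycleGraph (G : SimpleGraph V) : Prop :=
  ∃ (v : V) (w : G.Walk v v), w.IsCycle ∧ (∀ x : V, x ∈ w.support) ∧
    ∀ e ∈ G.edgeSet, e ∈ w.edges

/-!
Removing a vertex keeps the graph connected, so the two ends of any edge are joined, through a
third vertex, by a walk avoiding that edge, and the graph contains a cycle `C`. As the graph is
not `C` itself, some edge outside `C` has an endpoint `x` on `C`. Either it is a chord, or it
continues, inside `G - x`, along a path that first returns to `C` at a vertex other than `x`.
This ear between distinct vertices `u` and `v` of `C`, together with the two arcs of `C` from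
`u` to `v`, is a diamond.
-/

namespace SimpleGraph

variable {G : SimpleGraph V} {u v w x y : V}

lemma exists_walk_notMem_support (h : (G.induce {z | z ≠ w}).Preconnected)
    (hu : u ≠ w) (hv : v ≠ w) : ∃ p : G.Walk u v, w ∉ p.support := by
  obtain ⟨q⟩ := h ⟨u, hu⟩ ⟨v, hv⟩
  let p : G.Walk u v := q.map (Embedding.induce _).toHom
  have hp : p.support = q.support.map (↑) := Walk.support_map ..
  refine ⟨p, ?_⟩
  simp only [hp, List.mem_map, not_exists, not_and]
  exact fun z _ => z.2

namespace Walk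

lemma ne_of_not_nil_of_disjoint_edges {p q : G.Walk u v} (hp : ¬ p.Nil)
    (h : p.edges.Disjoint q.edges) : p ≠ q := by
  rintro rfl
  obtain ⟨e, he⟩ := List.exists_mem_of_ne_nil _ (mt edges_eq_nil.mp hp)
  exact h he he

lemma notMem_edges_of_forall_mem_support {p : G.Walk u v} {q : G.Walk w x}
    (h : ∀ z ∈ p.support, z ∈ q.support → z = v) : ∀ e ∈ p.edges, e ∉ q.edges := by
  intro e hp hq
  induction e using Sym2.ind with
  | _ a b =>
    have ha := h a (p.fst_mem_support_of_mem_edges hp) (q.fst_mem_support_of_mem_edges hq)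
    have hb := h b (p.snd_mem_support_of_mem_edges hp) (q.snd_mem_support_of_mem_edges hq)
    exact (p.adj_of_mem_edges hp).ne (ha.trans hb.symm)

lemma exists_walk_to_first_mem {S : Set V} (p : G.Walk u v) (hv : v ∈ S) :
    ∃ c ∈ S, ∃ q : G.Walk u c, q.support ⊆ p.support ∧
      ∀ z ∈ q.support, z ∈ S → z = c := by
  induction p with
  | nil => exact ⟨_, hv, nil, by simp, by simp⟩
  | @cons u _ _ h p ih =>
    by_cases hu : u ∈ S
    · exact ⟨u, hu, nil, by simp, by simp⟩
    obtain ⟨c, hc, q, hqp, hqS⟩ := ih hv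
    refine ⟨c, hc, cons h q, List.cons_subset_cons _ hqp, ?_⟩
    rintro z (_ | ⟨_, hz⟩) hzS
    · exact absurd hzS hu
    · exact hqS z hz hzS

lemma exists_path_to_first_mem {S : Set V} (p : G.Walk u v) (hv : v ∈ S) :
    ∃ c ∈ S, ∃ q : G.Walk u c, q.IsPath ∧ q.support ⊆ p.support ∧
      ∀ z ∈ q.support, z ∈ S → z = c := by
  classical
  obtain ⟨c, hc, q, hqp, hqS⟩ := p.exists_walk_to_first_mem hv
  exact ⟨c, hc, q.bypass, q.bypass_isPath, fun z hz => hqp (q.support_bypass_subset_support hz),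
    fun z hz => hqS z (q.support_bypass_subset_support hz)⟩

lemma IsCycle.eq_or_eq_of_mem_support_append {p : G.Walk u v} {q : G.Walk v u}
    (hc : (p.append q).IsCycle) (hp : x ∈ p.support) (hq : x ∈ q.support) :
    x = u ∨ x = v := by
  have hnd := hc.support_nodup
  rw [tail_support_append, List.nodup_append] at hnd
  rw [← cons_tail_support, List.mem_cons] at hp hq
  rcases hp with rfl | hp
  · exact .inl rfl
  rcases hq with rfl | hq
  · exact .inr rfl
  exact absurd rfl (hnd.2.2 _ hp _ hq)

structure IsEar (c : G.Walk w w) (P : G.Walk u v) : Prop where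
  ne : u ≠ v
  isPath : P.IsPath
  start_mem : u ∈ c.support
  end_mem : v ∈ c.support
  eq_or_eq_of_mem_support : ∀ x ∈ P.support, x ∈ c.support → x = u ∨ x = v
  notMem_edges : ∀ e ∈ P.edges, e ∉ c.edges

lemma IsEar.rotate [DecidableEq V] {c : G.Walk w w} {P : G.Walk u v} (hP : c.IsEar P)
    (hx : x ∈ c.support) :
    (c.rotate x hx).IsEar P where
  ne := hP.ne
  isPath := hP.isPath
  start_mem := (mem_support_rotate_iff ..).mpr hP.start_mem
  end_mem := (mem_support_rotate_iff ..).mpr hP.end_mem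
  eq_or_eq_of_mem_support z hz hzc :=
    hP.eq_or_eq_of_mem_support z hz ((mem_support_rotate_iff ..).mp hzc)
  notMem_edges e he hec := hP.notMem_edges e he ((rotate_edges ..).mem_iff.mp hec)

lemma IsCycle.nonempty_diamond_of_isEar_append {p : G.Walk u v} {q : G.Walk v u}
    {P : G.Walk u v} (hc : (p.append q).IsCycle) (hP : (p.append q).IsEar P) :
    Nonempty G.Diamond := by
  have hp : ¬ p.Nil := not_nil_of_ne hP.ne
  have hq : ¬ q.Nil := not_nil_of_ne hP.ne.symm
  have hpq : p.edges.Disjoint q.edges := List.disjoint_of_nodup_append <| by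
    simpa [← edges_append] using hc.edges_nodup
  have hPc (r : G.Walk u v) (hr : r.edges ⊆ (p.append q).edges) : P ≠ r :=
    ne_of_not_nil_of_disjoint_edges (not_nil_of_ne hP.ne)
      fun e hPe hre => hP.notMem_edges e hPe (hr hre)
  refine ⟨⟨u, v, hP.ne, P, p, q.reverse, hP.isPath, hc.isPath_of_append_left hq,
    (hc.isPath_of_append_right hp).reverse, hPc p (by simp), hPc q.reverse (by simp),
    ne_of_not_nil_of_disjoint_edges hp (by simpa using hpq), ?_, ?_, ?_⟩⟩
  · exact fun x hx hxp => hP.eq_or_eq_of_mem_support x hx (by simp [hxp])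
  · exact fun x hx hxq => hP.eq_or_eq_of_mem_support x hx (by simp_all)
  · exact fun x hxp hxq => hc.eq_or_eq_of_mem_support_append hxp (by simpa using hxq)

lemma IsEar.nonempty_diamond {c : G.Walk w w} {P : G.Walk u v} (hc : c.IsCycle)
    (hP : c.IsEar P) : Nonempty G.Diamond := by
  classical
  set c' := c.rotate u hP.start_mem
  have hc' : c'.IsCycle := hc.rotate hP.start_mem
  have hP' : c'.IsEar P := hP.rotate hP.start_mem
  have hv : v ∈ c'.support := hP'.end_mem
  rw [← take_spec c' hv] at hc' hP'
  exact hc'.nonempty_diamond_of_isEar_append hP'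

lemma exists_isEar_of_adj {c : G.Walk w w} (hc : ¬ c.Nil)
    (hcut : (G.induce {z | z ≠ x}).Preconnected) (hxy : G.Adj x y) (hx : x ∈ c.support)
    (hxyc : s(x, y) ∉ c.edges) : ∃ u v, ∃ P : G.Walk u v, c.IsEar P := by
  by_cases hy : y ∈ c.support
  · refine ⟨x, y, cons hxy nil, hxy.ne, by simp [hxy.ne], hx, hy, by simp, ?_⟩
    simpa using hxyc
  obtain ⟨d, hdc, hdx⟩ : ∃ d ∈ c.support, d ≠ x := by
    by_contra! h
    exact (c.adj_snd hc).ne <| (h _ c.start_mem_support).trans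
      (h _ (c.snd_mem_support_of_mem_edges (c.mk_start_snd_mem_edges hc))).symm
  obtain ⟨W, hW⟩ := exists_walk_notMem_support hcut hxy.ne.symm hdx
  obtain ⟨v, hvc, p, hp, hpW, hpc⟩ :=
    W.exists_path_to_first_mem (S := {z | z ∈ c.support}) hdc
  have hxp : x ∉ p.support := fun h => hW (hpW h)
  refine ⟨x, v, cons hxy p, fun h => hxp (h ▸ p.end_mem_support), hp.cons hxp, hx, hvc,
    ?_, ?_⟩
  · rintro z (_ | ⟨_, hz⟩) hzc
    · exact .inl rfl
    · exact .inr (hpc z hz hzc)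
  · rintro e (_ | ⟨_, he⟩)
    · exact hxyc
    · exact notMem_edges_of_forall_mem_support hpc e he

lemma IsCycle.exists_adj_notMem_edges {c : G.Walk w w} (hc : c.IsCycle) (hconn : G.Connected)
    (hnc : ¬ G.IsCycleGraph) : ∃ x y, G.Adj x y ∧ x ∈ c.support ∧ s(x, y) ∉ c.edges := by
  by_cases hall : ∀ z, z ∈ c.support
  · have : ∃ e ∈ G.edgeSet, e ∉ c.edges := by
      by_contra! h
      exact hnc ⟨w, c, hc, hall, h⟩
    obtain ⟨e, he, hec⟩ := this
    induction e using Sym2.ind with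
    | _ x y => exact ⟨x, y, he, hall x, hec⟩
  obtain ⟨z, hz⟩ := not_forall.mp hall
  obtain ⟨W⟩ := hconn.preconnected w z
  obtain ⟨d, -, hd, hdz⟩ := W.exists_boundary_dart {z | z ∈ c.support} c.start_mem_support hz
  exact ⟨d.fst, d.snd, d.adj, hd, fun h => hdz (c.snd_mem_support_of_mem_edges h)⟩

end Walk

lemma exists_isCycle_mem_edges_of_adj (hu : (G.induce {z | z ≠ u}).Preconnected)
    (hw : (G.induce {z | z ≠ w}).Preconnected) (huw : G.Adj u w) (hxu : x ≠ u) (hxw : x ≠ w) :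
    ∃ (y : V) (c : G.Walk y y), c.IsCycle ∧ s(u, w) ∈ c.edges := by
  obtain ⟨p, hp⟩ := exists_walk_notMem_support hw huw.ne hxw
  obtain ⟨q, hq⟩ := exists_walk_notMem_support hu hxu huw.ne.symm
  have hpq : s(u, w) ∉ (p.append q).edges := by
    rw [Walk.edges_append, List.mem_append, not_or]
    exact ⟨fun h => hp (p.snd_mem_support_of_mem_edges h),
      fun h => hq (q.fst_mem_support_of_mem_edges h)⟩
  exact adj_and_reachable_delete_edges_iff_exists_cycle.mp
    ⟨huw, reachable_deleteEdges_iff_exists_walk.mpr ⟨_, hpq⟩⟩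

lemma exists_isCycle [Fintype V] (hcard : 3 ≤ Fintype.card V)
    (hcut : ∀ v : V, (G.induce {w | w ≠ v}).Preconnected) :
    ∃ (y : V) (c : G.Walk y y), c.IsCycle := by
  obtain ⟨a, b, x, hab, hax, hbx⟩ := Fintype.two_lt_card_iff.mp hcard
  obtain ⟨p, hp⟩ := exists_walk_notMem_support (hcut x) hax hbx
  have hpnil : ¬ p.Nil := Walk.not_nil_of_ne hab
  have hsnd : p.snd ≠ x := fun h =>
    hp (h ▸ p.snd_mem_support_of_mem_edges (p.mk_start_snd_mem_edges hpnil))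
  obtain ⟨y, c, hc, -⟩ :=
    exists_isCycle_mem_edges_of_adj (hcut a) (hcut _) (p.adj_snd hpnil) hax.symm hsnd.symm
  exact ⟨y, c, hc⟩

end SimpleGraph

/-- Every finite 2-connected simple graph on at least 3 vertices that is not a cycle
contains a diamond. -/
theorem diamond_of_two_connected_not_cycle (V : Type*) [Fintype V]
    (G : SimpleGraph V)
    (hcard : 3 ≤ Fintype.card V) (hconn : G.Connected)
    (hcut : ∀ v : V, (G.induce {w | w ≠ v}).Connected)
    (hnotcycle : ¬ G.IsCycleGraph) :
    Nonempty G.Diamond := by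
  obtain ⟨w, c, hc⟩ := exists_isCycle hcard fun v => (hcut v).preconnected
  obtain ⟨x, y, hxy, hx, hxyc⟩ := hc.exists_adj_notMem_edges hconn hnotcycle
  obtain ⟨u, v, P, hP⟩ := Walk.exists_isEar_of_adj hc.not_nil (hcut x).preconnected hxy hx hxyc
  exact hP.nonempty_diamond hc
end

section
/- A connected finite simple graph contains no diamond if and only if every edge of the graph lies in at most one cycle (i.e., the graph is a cactus). -/
open SimpleGraph

variable {V : Type*}

/-!
If two distinct cycles share the edge `ab`, deleting `ab` from them leaves two distinct
`a`–`b` paths `p` and `q`. Let `x` be the vertex where they diverge and `y` the first vertex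
after `x` at which `q` meets `p` again. The segment of `p` from `x` to `y`, the segment of `q`
from `x` to `y`, and the walk from `x` back along `p` to `a`, across `ab`, and back along `p`
from `b` to `y` form a diamond.

Conversely, if `P₁, P₂, P₃` form a diamond, the cycles `P₁P₂⁻¹` and `P₁P₃⁻¹` share the edges
of `P₁`. If `P₂` is not a single edge, its edges are disjoint from those of `P₁` and `P₃`, so
the two cycles differ; and `P₂`, `P₃` cannot both be the single edge `uv`.
-/

namespace SimpleGraph.Walk

variable {G : SimpleGraph V} {a b u v w : V}

theorem isPath_append_iff {p : G.Walk u v} {q : G.Walk v w} :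
    (p.append q).IsPath ↔ p.IsPath ∧ q.IsPath ∧ ∀ z ∈ p.support, z ∈ q.support → z = v := by
  rw [isPath_def, isPath_def, isPath_def, support_append, List.nodup_append,
    ← q.cons_tail_support, List.nodup_cons, List.tail_cons]
  constructor
  · rintro ⟨hp, hq, hd⟩
    refine ⟨hp, ⟨fun hv => hd v p.end_mem_support v hv rfl, hq⟩, fun z hzp hzq => ?_⟩
    rcases List.mem_cons.mp hzq with rfl | hz
    · rfl
    · exact absurd rfl (hd z hzp z hz)
  · rintro ⟨hp, ⟨hv, hq⟩, hd⟩
    refine ⟨hp, hq, fun z hzp z' hz' hzz => ?_⟩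
    subst hzz
    exact hv (hd z hzp (List.mem_cons_of_mem _ hz') ▸ hz')

theorem eq_of_length_eq_one : ∀ {p q : G.Walk u v}, p.length = 1 → q.length = 1 → p = q
  | cons _ nil, cons _ nil, _, _ => rfl
  | nil, _, hp, _ | cons _ (cons _ _), _, hp, _ | _, nil, _, hp
  | _, cons _ (cons _ _), _, hp => by simp at hp

theorem IsPath.support_tail_disjoint {p q : G.Walk u v} (hp : p.IsPath) (hq : q.IsPath)
    (hd : ∀ z ∈ p.support, z ∈ q.support → z = u ∨ z = v) :
    p.support.tail.Disjoint q.reverse.support.tail := by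
  intro z hzp hzq
  have hzu : z ≠ u := by
    rintro rfl
    exact (List.nodup_cons.mp (p.cons_tail_support ▸ hp.support_nodup)).1 hzp
  have hzv : z ≠ v := by
    rintro rfl
    exact (List.nodup_cons.mp (q.reverse.cons_tail_support ▸ hq.reverse.support_nodup)).1 hzq
  have hzq' : z ∈ q.support := by
    simpa using List.mem_of_mem_tail hzq
  rcases hd z (List.mem_of_mem_tail hzp) hzq' with rfl | rfl <;> contradiction

theorem IsPath.isCycle_append_reverse {p q : G.Walk u v} (hp : p.IsPath) (hq : q.IsPath)
    (hpq : p ≠ q) (hd : ∀ z ∈ p.support, z ∈ q.support → z = u ∨ z = v) :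
    (p.append q.reverse).IsCycle := by
  refine hp.isCycle_append hq.reverse (hp.support_tail_disjoint hq hd) ?_
  have huv : u ≠ v := by
    rintro rfl
    exact hpq ((isPath_iff_nil.mp hp).eq_nil.trans (isPath_iff_nil.mp hq).eq_nil.symm)
  have hp0 : p.length ≠ 0 := fun h => huv (eq_of_length_eq_zero h)
  have hq0 : q.length ≠ 0 := fun h => huv (eq_of_length_eq_zero h)
  by_contra! hle
  rw [length_reverse] at hle
  exact hpq (eq_of_length_eq_one (by omega) (by omega))

theorem IsPath.exists_eq_append_cons_of_ne :
    ∀ {u : V} {p q : G.Walk u v}, p.IsPath → q.IsPath → p ≠ q →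
    ∃ (x x₁ x₂ : V) (r : G.Walk u x) (h₁ : G.Adj x x₁) (h₂ : G.Adj x x₂)
      (p' : G.Walk x₁ v) (q' : G.Walk x₂ v),
      x₁ ≠ x₂ ∧ p = r.append (cons h₁ p') ∧ q = r.append (cons h₂ q')
  | _, .nil, .nil, _, _, hpq => absurd rfl hpq
  | _, .nil, .cons _ _, _, hq, _ | _, .cons _ _, .nil, hq, _, _ => by
    simp at hq
  | u, .cons (v := x₁) h₁ p', .cons (v := x₂) h₂ q', hp, hq, hpq => by
    by_cases hx : x₁ = x₂
    · subst hx
      obtain ⟨x, y₁, y₂, r, g₁, g₂, p'', q'', hy, rfl, rfl⟩ :=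
        hp.of_cons.exists_eq_append_cons_of_ne hq.of_cons (by rintro rfl; exact hpq rfl)
      exact ⟨x, y₁, y₂, cons h₁ r, g₁, g₂, p'', q'', hy, rfl, rfl⟩
    · exact ⟨u, x₁, x₂, .nil, h₁, h₂, p', q', hx, rfl, rfl⟩

theorem exists_eq_append_of_mem {S : Set V} : ∀ {u v : V} (p : G.Walk u v), v ∈ S →
    ∃ (y : V) (p₁ : G.Walk u y) (p₂ : G.Walk y v),
      p = p₁.append p₂ ∧ y ∈ S ∧ ∀ z ∈ p₁.support, z ∈ S → z = y
  | u, _, .nil, hv => ⟨u, nil, nil, rfl, hv, by simp⟩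
  | u, _, .cons h p, hv => by
    by_cases hu : u ∈ S
    · exact ⟨u, nil, cons h p, rfl, hu, by simp⟩
    · obtain ⟨y, p₁, p₂, rfl, hy, hfirst⟩ := exists_eq_append_of_mem p hv
      refine ⟨y, cons h p₁, p₂, rfl, hy, fun z hz hzS => ?_⟩
      rcases List.mem_cons.mp (support_cons h p₁ ▸ hz) with rfl | hz
      · exact absurd hzS hu
      · exact hfirst z hz hzS

theorem IsCycle.snd_eq_or_penultimate_eq {c : G.Walk a a} (hc : c.IsCycle)
    (h : s(a, b) ∈ c.edges) : c.snd = b ∨ c.penultimate = b := by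
  cases c with
  | nil => simp at h
  | cons hadj t =>
    rw [cons_isCycle_iff] at hc
    rcases List.mem_cons.mp (edges_cons hadj t ▸ h) with h | h
    · exact Or.inl (by simpa using (Sym2.congr_right.mp h).symm)
    · have ht : ¬ t.Nil := not_nil_of_ne hadj.ne.symm
      rw [penultimate_cons_of_not_nil _ _ ht]
      exact Or.inr (hc.1.eq_penultimate_of_mem_edges h).symm

theorem IsCycle.exists_isPath_of_mem_edges {c : G.Walk v v} (hc : c.IsCycle)
    (h : s(a, b) ∈ c.edges) : ∃ p : G.Walk a b, p.IsPath ∧ s(a, b) ∉ p.edges ∧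
      ∀ e, e ∈ c.edges ↔ e = s(a, b) ∨ e ∈ p.edges := by
  classical
  have ha : a ∈ c.support := c.fst_mem_support_of_mem_edges h
  have hrot : ∀ e, e ∈ (c.rotate a ha).edges ↔ e ∈ c.edges :=
    fun _ => (c.rotate_edges a ha).mem_iff
  suffices key : ∀ c' : G.Walk a a, c'.IsCycle → (∀ e, e ∈ c'.edges ↔ e ∈ c.edges) →
      c'.snd = b → ∃ p : G.Walk a b, p.IsPath ∧ s(a, b) ∉ p.edges ∧
        ∀ e, e ∈ c.edges ↔ e = s(a, b) ∨ e ∈ p.edges by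
    rcases (hc.rotate ha).snd_eq_or_penultimate_eq ((hrot _).mpr h) with hsnd | hpen
    · exact key _ (hc.rotate ha) hrot hsnd
    · refine key _ (hc.rotate ha).reverse (fun e => ?_) (by rwa [snd_reverse])
      rw [edges_reverse, List.mem_reverse, hrot]
  intro c' hc' hedges hsnd
  cases c' with
  | nil => exact absurd (by simpa using hsnd) (c.adj_of_mem_edges h).ne
  | cons hadj t =>
    rw [snd_cons] at hsnd
    subst hsnd
    rw [cons_isCycle_iff] at hc'
    exact ⟨t.reverse, hc'.1.reverse, by simpa using hc'.2, fun e => by simp [← hedges]⟩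

end SimpleGraph.Walk

namespace SimpleGraph

variable {G : SimpleGraph V} {a b u v x x₁ x₂ y : V}

open Walk

theorem exists_ne_mem_cycleSet_of_three_paths {p₁ p₂ p₃ : G.Walk u v} (h₁ : p₁.IsPath)
    (h₂ : p₂.IsPath) (h₃ : p₃.IsPath) (huv : u ≠ v) (hne₁₂ : p₁ ≠ p₂) (hne₁₃ : p₁ ≠ p₃)
    (hd₁₂ : ∀ z ∈ p₁.support, z ∈ p₂.support → z = u ∨ z = v)
    (hd₁₃ : ∀ z ∈ p₁.support, z ∈ p₃.support → z = u ∨ z = v)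
    (hd₂₃ : ∀ z ∈ p₂.support, z ∈ p₃.support → z = u ∨ z = v) (hl : p₂.length ≠ 1) :
    ∃ e, ∃ s₁ ∈ G.cycleSet, ∃ s₂ ∈ G.cycleSet, e ∈ s₁ ∧ e ∈ s₂ ∧ s₁ ≠ s₂ := by
  have he := mk_start_snd_mem_edges (p := p₁) (not_nil_of_ne huv)
  have hf := mk_start_snd_mem_edges (p := p₂) (not_nil_of_ne huv)
  refine ⟨s(u, p₁.snd), _, ⟨u, _, h₁.isCycle_append_reverse h₂ hne₁₂ hd₁₂, rfl⟩,
    _, ⟨u, _, h₁.isCycle_append_reverse h₃ hne₁₃ hd₁₃, rfl⟩, by simp [he], by simp [he],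
    fun hcycles => ?_⟩
  have hf₁₃ : s(u, p₂.snd) ∈ p₁.edges ∨ s(u, p₂.snd) ∈ p₃.edges := by
    simpa using (Set.ext_iff.mp hcycles _).mp (by simp [hf])
  have hdisj₁ := h₂.disjoint_edges_of_disjoint_support
    (h₂.support_tail_disjoint h₁ fun z hz₂ hz₁ => hd₁₂ z hz₁ hz₂) hl
  have hdisj₃ := h₂.disjoint_edges_of_disjoint_support (h₂.support_tail_disjoint h₃ hd₂₃) hl
  rw [edges_reverse] at hdisj₁ hdisj₃
  rcases hf₁₃ with h | h
  · exact hdisj₁ hf (List.mem_reverse.mpr h)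
  · exact hdisj₃ hf (List.mem_reverse.mpr h)

theorem Diamond.exists_ne_mem_cycleSet (D : G.Diamond) :
    ∃ e, ∃ s₁ ∈ G.cycleSet, ∃ s₂ ∈ G.cycleSet, e ∈ s₁ ∧ e ∈ s₂ ∧ s₁ ≠ s₂ := by
  by_cases hl : D.p₂.length = 1
  · have hl₃ : D.p₃.length ≠ 1 := fun hl₃ => D.ne₂₃ (eq_of_length_eq_one hl hl₃)
    exact exists_ne_mem_cycleSet_of_three_paths D.h₁ D.h₃ D.h₂ D.ne D.ne₁₃ D.ne₁₂ D.disj₁₃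
      D.disj₁₂ (fun z hz₃ hz₂ => D.disj₂₃ z hz₂ hz₃) hl₃
  · exact exists_ne_mem_cycleSet_of_three_paths D.h₁ D.h₂ D.h₃ D.ne D.ne₁₂ D.ne₁₃ D.disj₁₂
      D.disj₁₃ D.disj₂₃ hl

theorem nonempty_diamond_of_branch (hab : G.Adj a b) {r : G.Walk a x} (h₁ : G.Adj x x₁)
    (h₂ : G.Adj x x₂) {t : G.Walk x₁ y} {s : G.Walk y b} {q : G.Walk x₂ y} (hx : x₁ ≠ x₂)
    (hp : (r.append (cons h₁ (t.append s))).IsPath) (hq : (r.append (cons h₂ q)).IsPath)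
    (hfirst : ∀ z ∈ q.support, z ∈ (t.append s).support → z = y)
    (hpab : s(a, b) ∉ (r.append (cons h₁ (t.append s))).edges)
    (hqab : s(a, b) ∉ (r.append (cons h₂ q)).edges) : Nonempty G.Diamond := by
  rw [isPath_append_iff, cons_isPath_iff, isPath_append_iff] at hp
  obtain ⟨hr, ⟨⟨ht, hs, hts⟩, hxts⟩, hrp⟩ := hp
  obtain ⟨-, hB, hrq⟩ := isPath_append_iff.mp hq
  simp only [support_cons, List.mem_cons, mem_support_append_iff] at hxts hrp hrq hfirst
  have hxy : x ≠ y := by rintro rfl; exact hxts (Or.inl t.end_mem_support)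
  have hA : (cons h₁ t).IsPath := ht.cons fun h => hxts (Or.inl h)
  have hW : (r.reverse.append (cons hab s.reverse)).IsPath := by
    refine isPath_append_iff.mpr ⟨hr.reverse, hs.reverse.cons fun ha => ?_, fun z hzr hzs => ?_⟩
    · rw [support_reverse, List.mem_reverse] at ha
      obtain rfl := hrp a r.start_mem_support (Or.inr (Or.inr ha))
      exact hxts (Or.inr ha)
    · simp only [support_reverse, List.mem_reverse, support_cons, List.mem_cons] at hzr hzs
      refine hzs.resolve_right fun hz => ?_
      obtain rfl := hrp z hzr (Or.inr (Or.inr hz))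
      exact hxts (Or.inr hz)
  have habW : s(a, b) ∈ (r.reverse.append (cons hab s.reverse)).edges := by simp
  refine ⟨⟨x, y, hxy, cons h₁ t, cons h₂ q, _, hA, hB, hW,
    fun h => hx (by simpa using congrArg Walk.snd h),
    fun h => hpab ?_, fun h => hqab ?_, ?_, ?_, ?_⟩⟩
  · rw [← h] at habW
    simp only [edges_append, edges_cons, List.mem_append, List.mem_cons] at habW ⊢
    tauto
  · rw [← h] at habW
    simp only [edges_append, edges_cons, List.mem_cons] at habW ⊢
    exact List.mem_append_right _ (List.mem_cons.mpr habW)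
  · intro z hzA hzB
    simp only [support_cons, List.mem_cons] at hzA hzB
    rcases hzA with rfl | hzA
    · exact Or.inl rfl
    rcases hzB with rfl | hzB
    · exact Or.inl rfl
    exact Or.inr (hfirst z hzB (Or.inl hzA))
  · intro z hzA hzW
    simp only [support_cons, List.mem_cons, mem_support_append_iff, support_reverse,
      List.mem_reverse] at hzA hzW
    rcases hzA with rfl | hzA
    · exact Or.inl rfl
    rcases hzW with hzr | rfl | hzs
    · exact Or.inl (hrp z hzr (Or.inr (Or.inl hzA)))
    · exact Or.inl (hrp _ r.start_mem_support (Or.inr (Or.inl hzA)))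
    · exact Or.inr (hts z hzA hzs)
  · intro z hzB hzW
    simp only [support_cons, List.mem_cons, mem_support_append_iff, support_reverse,
      List.mem_reverse] at hzB hzW
    rcases hzB with rfl | hzB
    · exact Or.inl rfl
    rcases hzW with hzr | rfl | hzs
    · exact Or.inl (hrq z hzr (Or.inr hzB))
    · exact Or.inl (hrq _ r.start_mem_support (Or.inr hzB))
    · exact Or.inr (hfirst z hzB (Or.inr hzs))

theorem nonempty_diamond_of_isPath_ne (hab : G.Adj a b) {p q : G.Walk a b} (hp : p.IsPath)
    (hq : q.IsPath) (hpab : s(a, b) ∉ p.edges) (hqab : s(a, b) ∉ q.edges) (hpq : p ≠ q) :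
    Nonempty G.Diamond := by
  classical
  obtain ⟨x, x₁, x₂, r, h₁, h₂, p', q', hx, rfl, rfl⟩ := hp.exists_eq_append_cons_of_ne hq hpq
  obtain ⟨y, q₁, q₂, rfl, hy, hfirst⟩ :=
    q'.exists_eq_append_of_mem (S := {z | z ∈ p'.support}) p'.end_mem_support
  obtain ⟨t, s, rfl⟩ : ∃ (t : G.Walk x₁ y) (s : G.Walk y b), p' = t.append s :=
    ⟨_, _, (p'.take_spec hy).symm⟩
  rw [← cons_append, append_assoc] at hq hqab
  exact nonempty_diamond_of_branch hab h₁ h₂ hx hp hq.of_append_left hfirst hpab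
    fun h => hqab (edges_append _ q₂ ▸ List.mem_append_left _ h)

theorem nonempty_diamond_of_mem_cycleSet {e : Sym2 V} {s₁ s₂ : Set (Sym2 V)}
    (hs₁ : s₁ ∈ G.cycleSet) (hs₂ : s₂ ∈ G.cycleSet) (he₁ : e ∈ s₁) (he₂ : e ∈ s₂)
    (hne : s₁ ≠ s₂) : Nonempty G.Diamond := by
  obtain ⟨_, c₁, hc₁, rfl⟩ := hs₁
  obtain ⟨_, c₂, hc₂, rfl⟩ := hs₂
  induction e using Sym2.ind with
  | _ a b =>
    obtain ⟨p, hp, hpab, hc₁p⟩ := hc₁.exists_isPath_of_mem_edges he₁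
    obtain ⟨q, hq, hqab, hc₂q⟩ := hc₂.exists_isPath_of_mem_edges he₂
    refine nonempty_diamond_of_isPath_ne (c₁.adj_of_mem_edges he₁) hp hq hpab hqab ?_
    rintro rfl
    exact hne (Set.ext fun f => (hc₁p f).trans (hc₂q f).symm)

end SimpleGraph

theorem diamond_free_iff_cactus_general (V : Type*) (G : SimpleGraph V) :
    IsEmpty G.Diamond ↔
      ∀ e : Sym2 V, ∀ s₁ ∈ G.cycleSet, ∀ s₂ ∈ G.cycleSet, e ∈ s₁ → e ∈ s₂ → s₁ = s₂ := by
  refine ⟨fun h e s₁ hs₁ s₂ hs₂ he₁ he₂ => ?_, fun h => ⟨fun D => ?_⟩⟩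
  · by_contra hne
    exact h.false (nonempty_diamond_of_mem_cycleSet hs₁ hs₂ he₁ he₂ hne).some
  · obtain ⟨e, s₁, hs₁, s₂, hs₂, he₁, he₂, hne⟩ := D.exists_ne_mem_cycleSet
    exact hne (h e s₁ hs₁ s₂ hs₂ he₁ he₂)

/-- A connected finite simple graph contains no diamond if and only if every edge lies in at
most one cycle (i.e. it is a cactus). -/
theorem diamond_free_iff_cactus (V : Type*) [Fintype V]
    (G : SimpleGraph V) (hconn : G.Connected) :
    IsEmpty G.Diamond ↔
      ∀ e : Sym2 V, ∀ s₁ ∈ G.cycleSet, ∀ s₂ ∈ G.cycleSet, e ∈ s₁ → e ∈ s₂ → s₁ = s₂ :=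
  diamond_free_iff_cactus_general V G
end

section
/- Let C₁ and C₂ be two distinct cycles of a finite simple graph that share at least one edge. Then the union C₁ ∪ C₂ contains a diamond, and this diamond has at most ||C₁|| + ||C₂|| − 1 edges, where ||C|| denotes the number of edges of C. -/
/-!
Some edge `f` lies on one of the cycles, say `C₂`, but not on the other. The ends `a ≠ b` of the
shared edge cut `C₂` into two `a`–`b` paths; in the one through `f`, the stretch around `f`
between consecutive vertices of `C₁` is a path `P` meeting `C₁` only at its ends `u ≠ v`, and
`‖P‖ ≤ ‖C₂‖ − 1` because the other `a`–`b` path has an edge. The two `u`–`v` arcs of `C₁`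
together with `P` form a diamond with `‖C₁‖ + ‖P‖` edges.
-/

open SimpleGraph

variable {V : Type*}

namespace SimpleGraph.Walk

variable {G : SimpleGraph V} {u v w x y : V}

section Cycles

variable [DecidableEq V] {c : G.Walk u u}

lemma IsCycle.isPath_dropUntil (hc : c.IsCycle) (hv : v ∈ c.support) (huv : u ≠ v) :
    (c.dropUntil v hv).IsPath :=
  IsCycle.isPath_of_append_right (p := c.takeUntil v hv) (not_nil_of_ne huv)
    (by rwa [take_spec])

lemma IsCycle.disjoint_support_tail_takeUntil_dropUntil (hc : c.IsCycle) (hv : v ∈ c.support) :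
    (c.takeUntil v hv).support.tail.Disjoint (c.dropUntil v hv).support.tail := by
  have h := hc.support_nodup
  rw [← take_spec c hv, tail_support_append, List.nodup_append'] at h
  exact h.2.2

end Cycles

lemma IsCycle.exists_isPath_split {c : G.Walk w w} (hc : c.IsCycle) (hu : u ∈ c.support)
    (hv : v ∈ c.support) (huv : u ≠ v) :
    ∃ p q : G.Walk u v, p.IsPath ∧ q.IsPath ∧ p ≠ q ∧
      (∀ z ∈ p.support, z ∈ q.support → z = u ∨ z = v) ∧
      p.support ⊆ c.support ∧ q.support ⊆ c.support ∧
      (∀ e, e ∈ c.edges ↔ e ∈ p.edges ∨ e ∈ q.edges) ∧ p.length + q.length = c.length := by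
  classical
  set c' := c.rotate u hu
  have hc' : c'.IsCycle := hc.rotate hu
  have hv' : v ∈ c'.support := (mem_support_rotate_iff ..).2 hv
  have hspec := c'.take_spec hv'
  set p := c'.takeUntil v hv'
  set d := c'.dropUntil v hv'
  have hsupp : p.support ⊆ c.support := fun z hz ↦
    (mem_support_rotate_iff ..).1 (c'.support_takeUntil_subset_support hv' hz)
  have hsupd : d.support ⊆ c.support := fun z hz ↦
    (mem_support_rotate_iff ..).1 (c'.support_dropUntil_subset_support hv' hz)
  refine ⟨p, d.reverse, hc'.isPath_takeUntil hv', (hc'.isPath_dropUntil hv' huv).reverse,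
    ?_, ?_, hsupp, by simpa using hsupd, fun e ↦ ?_, ?_⟩
  · intro hpd
    obtain ⟨e, he⟩ := List.exists_mem_of_ne_nil p.edges (edges_eq_nil.not.2 (not_nil_of_ne huv))
    refine hc'.isTrail.disjoint_edges_takeUntil_dropUntil hv' he ?_
    simpa [hpd] using he
  · intro z hzp hzd
    rw [support_reverse, List.mem_reverse, ← cons_tail_support, List.mem_cons] at hzd
    rw [← cons_tail_support, List.mem_cons] at hzp
    rcases hzp with rfl | hzp
    · exact .inl rfl
    rcases hzd with rfl | hzd
    · exact .inr rfl
    exact (hc'.disjoint_support_tail_takeUntil_dropUntil hv' hzp hzd).elim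
  · rw [← (c.rotate_edges u hu).mem_iff]
    change e ∈ c'.edges ↔ _
    rw [← hspec, edges_append, List.mem_append, edges_reverse, List.mem_reverse]
  · rw [length_reverse, ← length_append, hspec, length_rotate]

-- An *ear* of a vertex set `S` is a walk whose ends, and no other vertices, lie in `S`.
lemma exists_ear_isSubwalk_of_mem_edges (S : Set V) {f : Sym2 V} (q : G.Walk x y)
    (hx : x ∈ S) (hy : y ∈ S) (hf : f ∈ q.edges) :
    ∃ (u v : V) (P : G.Walk u v), P.IsSubwalk q ∧ f ∈ P.edges ∧ u ∈ S ∧ v ∈ S ∧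
      ∀ z ∈ P.support, z ∈ S → z = u ∨ z = v := by
  classical
  induction hn : q.length using Nat.strong_induction_on generalizing x y with
  | _ n ih =>
  by_cases! hint : ∃ z ∈ q.support, z ∈ S ∧ z ≠ x ∧ z ≠ y
  · obtain ⟨z, hz, hzS, hzx, hzy⟩ := hint
    rw [← q.take_spec hz, edges_append, List.mem_append] at hf
    rcases hf with hf | hf
    · obtain ⟨u, v, P, hPq, hP⟩ := ih _ (hn ▸ q.length_takeUntil_lt_length hz hzy) _ hx hzS hf rfl
      exact ⟨u, v, P, hPq.trans (q.isSubwalk_takeUntil hz), hP⟩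
    · obtain ⟨u, v, P, hPq, hP⟩ := ih _ (hn ▸ q.length_dropUntil_lt_length hz hzx) _ hzS hy hf rfl
      exact ⟨u, v, P, hPq.trans (q.isSubwalk_dropUntil hz), hP⟩
  · exact ⟨x, y, q, q.isSubwalk_rfl, hf, hx, hy,
      fun z hz hzS ↦ or_iff_not_imp_left.2 (hint z hz hzS)⟩

end SimpleGraph.Walk

namespace SimpleGraph

variable {G : SimpleGraph V} {u v w : V}

lemma exists_diamond_of_isCycle_of_ear {c : G.Walk w w} (hc : c.IsCycle) {P : G.Walk u v}
    (hP : P.IsPath) (huv : u ≠ v) (hu : u ∈ c.support) (hv : v ∈ c.support)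
    (hPc : ∀ z ∈ P.support, z ∈ c.support → z = u ∨ z = v) {f : Sym2 V} (hfP : f ∈ P.edges)
    (hfc : f ∉ c.edges) :
    ∃ D : G.Diamond, D.edgeSet ⊆ {e | e ∈ c.edges} ∪ {e | e ∈ P.edges} ∧
      D.size = c.length + P.length := by
  obtain ⟨p, q, hp, hq, hpq, hpq_disj, hpc, hqc, hc_edges, hlen⟩ :=
    hc.exists_isPath_split hu hv huv
  have hP_ne {r : G.Walk u v} (hr : ∀ e ∈ r.edges, e ∈ c.edges) : r ≠ P := by
    rintro rfl
    exact hfc (hr f hfP)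
  refine ⟨⟨u, v, huv, p, q, P, hp, hq, hP, hpq, hP_ne fun e he ↦ (hc_edges e).2 (.inl he),
    hP_ne fun e he ↦ (hc_edges e).2 (.inr he), hpq_disj, fun z hzp hzP ↦ hPc z hzP (hpc hzp),
    fun z hzq hzP ↦ hPc z hzP (hqc hzq)⟩, ?_, by simp [Diamond.size, ← hlen]⟩
  rintro e (he | he | he)
  exacts [.inl ((hc_edges e).2 (.inl he)), .inl ((hc_edges e).2 (.inr he)), .inr he]

lemma exists_diamond_of_isCycle_of_notMem_edges {v₁ v₂ a b : V} {c₁ : G.Walk v₁ v₁}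
    {c₂ : G.Walk v₂ v₂} (hc₁ : c₁.IsCycle) (hc₂ : c₂.IsCycle) (hab : a ≠ b)
    (ha₁ : a ∈ c₁.support) (hb₁ : b ∈ c₁.support) (ha₂ : a ∈ c₂.support) (hb₂ : b ∈ c₂.support)
    {f : Sym2 V} (hf₂ : f ∈ c₂.edges) (hf₁ : f ∉ c₁.edges) :
    ∃ D : G.Diamond, D.edgeSet ⊆ {e | e ∈ c₁.edges} ∪ {e | e ∈ c₂.edges} ∧
      D.size < c₁.length + c₂.length := by
  obtain ⟨p, q, hp, hq, -, -, -, -, hc₂_edges, hlen⟩ := hc₂.exists_isPath_split ha₂ hb₂ hab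
  have hp_pos : 0 < p.length := Walk.not_nil_iff_lt_length.1 (Walk.not_nil_of_ne hab)
  have hq_pos : 0 < q.length := Walk.not_nil_iff_lt_length.1 (Walk.not_nil_of_ne hab)
  obtain ⟨r, hr, hfr, hr_edges, hr_len⟩ : ∃ r : G.Walk a b, r.IsPath ∧ f ∈ r.edges ∧
      (∀ e ∈ r.edges, e ∈ c₂.edges) ∧ r.length < c₂.length := by
    rcases (hc₂_edges f).1 hf₂ with hf | hf
    · exact ⟨p, hp, hf, fun e he ↦ (hc₂_edges e).2 (.inl he), by omega⟩
    · exact ⟨q, hq, hf, fun e he ↦ (hc₂_edges e).2 (.inr he), by omega⟩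
  obtain ⟨u, v, P, hPr, hfP, hu, hv, hPc⟩ :=
    r.exists_ear_isSubwalk_of_mem_edges {z | z ∈ c₁.support} ha₁ hb₁ hfr
  have hP : P.IsPath := Walk.isPath_of_isSubwalk hPr hr
  have huv : u ≠ v := by
    rintro rfl
    simp [Walk.edges_eq_nil.2 (Walk.isPath_iff_nil.1 hP)] at hfP
  obtain ⟨D, hD_edges, hD_size⟩ :=
    exists_diamond_of_isCycle_of_ear hc₁ hP huv hu hv hPc hfP hf₁
  refine ⟨D, hD_edges.trans (Set.union_subset_union_right _ fun e he ↦ hr_edges e ?_), ?_⟩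
  · exact hPr.edges_subset he
  · have := Walk.length_le_of_isSubwalk hPr
    omega

end SimpleGraph

theorem diamond_of_two_cycles_sharing_edge_general (V : Type*)
    (G : SimpleGraph V) (v₁ v₂ : V) (w₁ : G.Walk v₁ v₁) (w₂ : G.Walk v₂ v₂)
    (h₁ : w₁.IsCycle) (h₂ : w₂.IsCycle)
    (hne : {e | e ∈ w₁.edges} ≠ {e | e ∈ w₂.edges})
    (hshare : ∃ e, e ∈ w₁.edges ∧ e ∈ w₂.edges) :
    ∃ D : G.Diamond,
      D.edgeSet ⊆ {e | e ∈ w₁.edges} ∪ {e | e ∈ w₂.edges} ∧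
      D.size ≤ w₁.length + w₂.length - 1 := by
  obtain ⟨⟨a, b⟩, he₁, he₂⟩ := hshare
  have hab : a ≠ b := (w₁.adj_of_mem_edges he₁).ne
  have ha₁ := w₁.fst_mem_support_of_mem_edges he₁
  have hb₁ := w₁.snd_mem_support_of_mem_edges he₁
  have ha₂ := w₂.fst_mem_support_of_mem_edges he₂
  have hb₂ := w₂.snd_mem_support_of_mem_edges he₂
  obtain ⟨D, hD, hlt⟩ : ∃ D : G.Diamond,
      D.edgeSet ⊆ {e | e ∈ w₁.edges} ∪ {e | e ∈ w₂.edges} ∧ D.size < w₁.length + w₂.length := by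
    by_cases! h₂₁ : ∃ f ∈ w₂.edges, f ∉ w₁.edges
    · obtain ⟨f, hf₂, hf₁⟩ := h₂₁
      exact exists_diamond_of_isCycle_of_notMem_edges h₁ h₂ hab ha₁ hb₁ ha₂ hb₂ hf₂ hf₁
    · obtain ⟨f, hf₁, hf₂⟩ : ∃ f ∈ w₁.edges, f ∉ w₂.edges := by
        by_contra! h₁₂
        exact hne (Set.Subset.antisymm h₁₂ h₂₁)
      obtain ⟨D, hD, hlt⟩ :=
        exists_diamond_of_isCycle_of_notMem_edges h₂ h₁ hab ha₂ hb₂ ha₁ hb₁ hf₁ hf₂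
      exact ⟨D, Set.union_comm _ _ ▸ hD, by omega⟩
  exact ⟨D, hD, by omega⟩

/-- If two distinct cycles `C₁`, `C₂` of a finite simple graph share an edge, then `C₁ ∪ C₂`
contains a diamond with at most `‖C₁‖ + ‖C₂‖ − 1` edges. -/
theorem diamond_of_two_cycles_sharing_edge (V : Type*) [Fintype V]
    (G : SimpleGraph V) (v₁ v₂ : V) (w₁ : G.Walk v₁ v₁) (w₂ : G.Walk v₂ v₂)
    (h₁ : w₁.IsCycle) (h₂ : w₂.IsCycle)
    (hne : {e | e ∈ w₁.edges} ≠ {e | e ∈ w₂.edges})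
    (hshare : ∃ e, e ∈ w₁.edges ∧ e ∈ w₂.edges) :
    ∃ D : G.Diamond,
      D.edgeSet ⊆ {e | e ∈ w₁.edges} ∪ {e | e ∈ w₂.edges} ∧
      D.size ≤ w₁.length + w₂.length - 1 :=
  diamond_of_two_cycles_sharing_edge_general V G v₁ v₂ w₁ w₂ h₁ h₂ hne hshare
end
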